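/- arXiv:2206.01591 — 8 statements merged into one kernel-verified Lean document; each statement's English description precedes it below -/
import Mathlib

section
/- For every positive integer k one has the two-sided bound (2^{2k}/√(πk)) · e^{−1/(6k)} < C(2k,k) < 2^{2k}/√(πk) for the central binomial coefficient. -/
/-!
Put `r k = C(2k,k)² k / 16ᵏ`, the square of `C(2k,k) √k / 4ᵏ`. The recursion
`(k+1) C(2k+2,k+1) = 2(2k+1) C(2k,k)` gives `r (k+1) = r k (1 + δ)` with `δ = 1/(4k(k+1))`, so `r`
increases strictly. Since `1/(3k) - 1/(3(k+1)) = 4δ/3` and `1 + δ ≤ e^δ`, the sequence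
`r k e^{1/(3k)}` decreases strictly. Wallis' product `W k = 16ᵏ / (C(2k,k)² (2k+1)) → π/2` shows
that both sequences tend to `1/π`, so `r k < 1/π < r k e^{1/(3k)}`; taking square roots gives the bounds.
-/

open Real Filter Topology

theorem StrictMono.lt_of_tendsto {α β : Type*} [TopologicalSpace α] [Preorder α]
    [OrderClosedTopology α] [PartialOrder β] [IsDirectedOrder β] [NoMaxOrder β] {f : β → α} {a : α}
    (hf : StrictMono f) (ha : Tendsto f atTop (𝓝 a)) (b : β) : f b < a := by
  obtain ⟨c, hbc⟩ := exists_gt b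
  exact (hf hbc).trans_le (hf.monotone.ge_of_tendsto ha c)

theorem StrictAnti.lt_of_tendsto {α β : Type*} [TopologicalSpace α] [Preorder α]
    [OrderClosedTopology α] [PartialOrder β] [IsDirectedOrder β] [NoMaxOrder β] {f : β → α} {a : α}
    (hf : StrictAnti f) (ha : Tendsto f atTop (𝓝 a)) (b : β) : a < f b :=
  StrictMono.lt_of_tendsto (α := αᵒᵈ) hf ha b

noncomputable def centralBinomRatio (k : ℕ) : ℝ := (Nat.centralBinom k : ℝ) ^ 2 * k / 16 ^ k

theorem centralBinomRatio_pos {k : ℕ} (hk : k ≠ 0) : 0 < centralBinomRatio k := by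
  unfold centralBinomRatio
  have := Nat.centralBinom_pos k
  positivity

theorem centralBinomRatio_succ {k : ℕ} (hk : k ≠ 0) :
    centralBinomRatio (k + 1) = centralBinomRatio k * (1 + 1 / (4 * k * (k + 1))) := by
  have hrec : (Nat.centralBinom (k + 1) : ℝ) = 2 * (2 * k + 1) * Nat.centralBinom k / (k + 1) := by
    rw [eq_div_iff (by positivity)]
    exact_mod_cast (mul_comm _ _).trans (Nat.succ_mul_centralBinom_succ k)
  have hk' : (k : ℝ) ≠ 0 := by exact_mod_cast hk
  rw [centralBinomRatio, centralBinomRatio, hrec]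
  push_cast
  field_simp
  ring

theorem Real.Wallis.W_eq_centralBinom (k : ℕ) :
    Wallis.W k = 16 ^ k / ((Nat.centralBinom k : ℝ) ^ 2 * (2 * k + 1)) := by
  have hfact : ((2 * k).factorial : ℝ) = Nat.centralBinom k * (k.factorial : ℝ) ^ 2 := by
    rw [Nat.centralBinom_eq_two_mul_choose, two_mul, ← Nat.add_choose_mul_factorial_mul_factorial]
    push_cast
    ring
  rw [Wallis.W_eq_factorial_ratio, hfact, pow_mul]
  field_simp
  norm_num

theorem tendsto_centralBinomRatio : Tendsto centralBinomRatio atTop (𝓝 π⁻¹) := by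
  have h := Stirling.tendsto_self_div_two_mul_self_add_one.div Wallis.tendsto_W_nhds_pi_div_two
    (by positivity)
  convert h using 1
  · ext k
    rw [Pi.div_apply, Wallis.W_eq_centralBinom, centralBinomRatio]
    have := Nat.centralBinom_pos k
    field_simp
  · field_simp

theorem strictMono_centralBinomRatio_succ : StrictMono fun k ↦ centralBinomRatio (k + 1) := by
  refine strictMono_nat_of_lt_succ fun k ↦ ?_
  rw [centralBinomRatio_succ k.succ_ne_zero]
  have := centralBinomRatio_pos k.succ_ne_zero
  exact lt_mul_right this (lt_add_of_pos_right _ (by positivity))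

theorem centralBinomRatio_mul_exp_succ_lt {k : ℕ} (hk : k ≠ 0) :
    centralBinomRatio (k + 1) * exp (1 / (3 * (k + 1 : ℕ))) <
      centralBinomRatio k * exp (1 / (3 * k)) := by
  set δ : ℝ := 1 / (4 * k * (k + 1)) with hδ_def
  have hk' : (k : ℝ) ≠ 0 := by exact_mod_cast hk
  have hexp : 1 / (3 * (k : ℝ)) = 1 / (3 * (k + 1 : ℕ)) + δ + δ / 3 := by
    rw [hδ_def]
    push_cast
    field_simp
    ring
  calc centralBinomRatio (k + 1) * exp (1 / (3 * (k + 1 : ℕ)))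
      = centralBinomRatio k * (1 + δ) * exp (1 / (3 * (k + 1 : ℕ))) := by
        rw [centralBinomRatio_succ hk]
    _ ≤ centralBinomRatio k * exp δ * exp (1 / (3 * (k + 1 : ℕ))) := by
        gcongr
        · exact (centralBinomRatio_pos hk).le
        · linarith [add_one_le_exp δ]
    _ < centralBinomRatio k * exp δ * exp (1 / (3 * (k + 1 : ℕ))) * exp (δ / 3) := by
        have := centralBinomRatio_pos hk
        exact lt_mul_of_one_lt_right (by positivity) (one_lt_exp_iff.2 (by positivity))
    _ = centralBinomRatio k * exp (1 / (3 * k)) := by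
        rw [hexp, exp_add, exp_add]
        ring

theorem strictAnti_centralBinomRatio_mul_exp_succ :
    StrictAnti fun k : ℕ ↦ centralBinomRatio (k + 1) * exp (1 / (3 * (k + 1 : ℕ))) :=
  strictAnti_nat_of_succ_lt fun k ↦ centralBinomRatio_mul_exp_succ_lt k.succ_ne_zero

theorem tendsto_centralBinomRatio_mul_exp :
    Tendsto (fun k : ℕ ↦ centralBinomRatio k * exp (1 / (3 * k))) atTop (𝓝 π⁻¹) := by
  have h : Tendsto (fun k : ℕ ↦ 1 / (3 * (k : ℝ))) atTop (𝓝 0) := by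
    simpa only [one_div, Function.comp_def] using
      tendsto_inv_atTop_zero.comp (tendsto_natCast_atTop_atTop.const_mul_atTop three_pos)
  simpa using tendsto_centralBinomRatio.mul ((continuous_exp.tendsto' 0 1 exp_zero).comp h)

theorem centralBinomRatio_lt_inv_pi {k : ℕ} (hk : k ≠ 0) : centralBinomRatio k < π⁻¹ := by
  obtain ⟨n, rfl⟩ := Nat.exists_eq_succ_of_ne_zero hk
  exact strictMono_centralBinomRatio_succ.lt_of_tendsto
    ((tendsto_add_atTop_iff_nat 1).2 tendsto_centralBinomRatio) n

theorem inv_pi_lt_centralBinomRatio_mul_exp {k : ℕ} (hk : k ≠ 0) :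
    π⁻¹ < centralBinomRatio k * exp (1 / (3 * k)) := by
  obtain ⟨n, rfl⟩ := Nat.exists_eq_succ_of_ne_zero hk
  exact strictAnti_centralBinomRatio_mul_exp_succ.lt_of_tendsto
    ((tendsto_add_atTop_iff_nat 1).2 tendsto_centralBinomRatio_mul_exp) n

theorem centralBinom_lt_four_pow_div_sqrt {k : ℕ} (hk : k ≠ 0) :
    (Nat.centralBinom k : ℝ) < 4 ^ k / √(π * k) := by
  have h := centralBinomRatio_lt_inv_pi hk
  rw [centralBinomRatio, div_lt_iff₀ (by positivity)] at h
  rw [lt_div_iff₀ (by positivity)]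
  refine lt_of_pow_lt_pow_left₀ 2 (by positivity) ?_
  calc ((Nat.centralBinom k : ℝ) * √(π * k)) ^ 2 = π * ((Nat.centralBinom k : ℝ) ^ 2 * k) := by
        rw [mul_pow, sq_sqrt (by positivity)]
        ring
    _ < π * (π⁻¹ * 16 ^ k) := by gcongr
    _ = (4 ^ k) ^ 2 := by
        rw [← pow_mul, mul_comm k 2, pow_mul]
        field_simp
        norm_num

theorem four_pow_div_sqrt_mul_exp_lt_centralBinom {k : ℕ} (hk : k ≠ 0) :
    4 ^ k / √(π * k) * exp (-1 / (6 * k)) < (Nat.centralBinom k : ℝ) := by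
  have h := inv_pi_lt_centralBinomRatio_mul_exp hk
  rw [centralBinomRatio] at h
  rw [div_mul_eq_mul_div, div_lt_iff₀ (by positivity)]
  refine lt_of_pow_lt_pow_left₀ 2 (by positivity) ?_
  have hexp : exp (-1 / (6 * k)) ^ 2 = (exp (1 / (3 * k)))⁻¹ := by
    rw [← exp_nat_mul, ← exp_neg]
    congr 1
    field_simp
    norm_num
  calc (4 ^ k * exp (-1 / (6 * k))) ^ 2 = π * (π⁻¹ * (16 ^ k * (exp (1 / (3 * k)))⁻¹)) := by
        rw [mul_pow, hexp, ← pow_mul, mul_comm k 2, pow_mul]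
        field_simp
        norm_num
    _ < π * ((Nat.centralBinom k : ℝ) ^ 2 * k / 16 ^ k * exp (1 / (3 * k)) *
          (16 ^ k * (exp (1 / (3 * k)))⁻¹)) := by gcongr
    _ = ((Nat.centralBinom k : ℝ) * √(π * k)) ^ 2 := by
        rw [mul_pow, sq_sqrt (by positivity)]
        field_simp

/-- For every positive integer `k` one has the two-sided bound
`(2^{2k}/√(πk)) e^{−1/(6k)} < C(2k,k) < 2^{2k}/√(πk)`. -/
theorem central_binomial_bounds (k : ℕ) (hk : 0 < k) :
    (2 : ℝ) ^ (2 * k) / Real.sqrt (Real.pi * k) * Real.exp (-1 / (6 * k)) <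
        (Nat.choose (2 * k) k : ℝ) ∧
      (Nat.choose (2 * k) k : ℝ) < (2 : ℝ) ^ (2 * k) / Real.sqrt (Real.pi * k) := by
  rw [← Nat.centralBinom_eq_two_mul_choose, pow_mul]
  norm_num only
  exact ⟨four_pow_div_sqrt_mul_exp_lt_centralBinom hk.ne',
    centralBinom_lt_four_pow_div_sqrt hk.ne'⟩
end

section
/- For every positive integer k, the quantity p_k := log₂ C(2k,k) satisfies 2k − (1/2)·log₂(πk) − 1/(4k) < p_k < 2k − (1/2)·log₂(πk). -/
/-!
Put `d k = k · C(2k,k)² / 16^k`, so that `p_k = 2k − ½ log₂(πk) + ½ log₂(π d k)`. Wallis' partial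
product equals `k / ((2k+1) d k)`; its lower bound `(2k+1)/(2k+2) · π/2` gives `π d k < 1`, and its
limit `π/2` gives `d k → 1/π`. Moreover `d (k+1) / d k = 1 + 1/(4k(k+1)) ≤ exp (1/(4k) − 1/(4(k+1)))`,
so `d k · exp (1/(4k))` decreases to `1/π`, whence `π d k ≥ exp (−1/(4k))`. Since `ln 2 > 1/2`, this
costs less than `1/(4k)` in `p_k`.
-/

open Real Filter Topology
open Nat (centralBinom centralBinom_pos)

theorem Nat.cast_centralBinom_succ (k : ℕ) :
    (centralBinom (k + 1) : ℝ) = 2 * (2 * k + 1) * centralBinom k / (k + 1) := by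
  rw [eq_div_iff (by positivity), mul_comm]
  exact_mod_cast Nat.succ_mul_centralBinom_succ k

theorem Real.Wallis.W_mul_centralBinom_sq (k : ℕ) :
    Wallis.W k * ((2 * k + 1) * centralBinom k ^ 2) = 16 ^ k := by
  induction k with
  | zero => simp [Wallis.W]
  | succ k ih =>
    rw [Wallis.W_succ, Nat.cast_centralBinom_succ, pow_succ 16, ← ih]
    push_cast
    field_simp
    ring

noncomputable def normCentralBinomSq (k : ℕ) : ℝ := k * centralBinom k ^ 2 / 16 ^ k

theorem normCentralBinomSq_pos {k : ℕ} (hk : k ≠ 0) : 0 < normCentralBinomSq k := by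
  have := centralBinom_pos k
  unfold normCentralBinomSq
  positivity

theorem normCentralBinomSq_eq_div_W (k : ℕ) :
    normCentralBinomSq k = k / (2 * k + 1) / Wallis.W k := by
  rw [normCentralBinomSq, ← Wallis.W_mul_centralBinom_sq]
  have := Wallis.W_pos k
  have := centralBinom_pos k
  field_simp

theorem tendsto_normCentralBinomSq : Tendsto normCentralBinomSq atTop (𝓝 π⁻¹) := by
  have h := Stirling.tendsto_self_div_two_mul_self_add_one.div Wallis.tendsto_W_nhds_pi_div_two
    (by positivity)
  rw [show (1 / 2) / (π / 2) = π⁻¹ by field_simp] at h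
  exact h.congr fun k ↦ (normCentralBinomSq_eq_div_W k).symm

theorem normCentralBinomSq_lt_inv_pi (k : ℕ) : normCentralBinomSq k < π⁻¹ := by
  have hW := Wallis.le_W k
  calc normCentralBinomSq k = k / (2 * k + 1) / Wallis.W k := normCentralBinomSq_eq_div_W k
    _ ≤ k / (2 * k + 1) / ((2 * k + 1) / (2 * k + 2) * (π / 2)) := by gcongr
    _ = 4 * k * (k + 1) / (2 * k + 1) ^ 2 * π⁻¹ := by field_simp; ring
    _ < 1 * π⁻¹ := by gcongr; rw [div_lt_one (by positivity)]; nlinarith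
    _ = π⁻¹ := one_mul _

theorem normCentralBinomSq_succ {k : ℕ} (hk : k ≠ 0) :
    normCentralBinomSq (k + 1) = (1 + 1 / (4 * k * (k + 1))) * normCentralBinomSq k := by
  rw [normCentralBinomSq, normCentralBinomSq, Nat.cast_centralBinom_succ]
  push_cast
  field_simp
  ring

theorem antitone_normCentralBinomSq_mul_exp :
    Antitone fun n : ℕ ↦ normCentralBinomSq (n + 1) * exp (1 / (4 * (n + 1 : ℕ))) := by
  refine antitone_nat_of_succ_le fun n ↦ ?_
  set k := n + 1
  have hk : (0 : ℝ) < k := by positivity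
  have hd : 0 ≤ normCentralBinomSq k := (normCentralBinomSq_pos (by omega)).le
  have hsplit : 1 / (4 * (k : ℝ)) = 1 / (4 * k * (k + 1)) + 1 / (4 * (k + 1 : ℕ)) := by
    push_cast; field_simp; ring
  calc normCentralBinomSq (k + 1) * exp (1 / (4 * (k + 1 : ℕ)))
      = (1 + 1 / (4 * k * (k + 1))) * normCentralBinomSq k * exp (1 / (4 * (k + 1 : ℕ))) := by
        rw [normCentralBinomSq_succ (by omega)]
    _ ≤ exp (1 / (4 * k * (k + 1))) * normCentralBinomSq k * exp (1 / (4 * (k + 1 : ℕ))) := by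
        gcongr
        linarith [add_one_le_exp (1 / (4 * (k : ℝ) * (k + 1)))]
    _ = normCentralBinomSq k * exp (1 / (4 * k)) := by
        rw [hsplit, exp_add]; ring

theorem inv_pi_le_normCentralBinomSq_mul_exp {k : ℕ} (hk : k ≠ 0) :
    π⁻¹ ≤ normCentralBinomSq k * exp (1 / (4 * k)) := by
  obtain ⟨n, rfl⟩ := Nat.exists_eq_succ_of_ne_zero hk
  have hexp : Tendsto (fun n : ℕ ↦ exp (1 / (4 * (n + 1 : ℕ)))) atTop (𝓝 1) := by
    have h4 : Tendsto (fun n : ℕ ↦ 4 * ((n + 1 : ℕ) : ℝ)) atTop atTop :=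
      (tendsto_natCast_atTop_atTop.comp (tendsto_add_atTop_nat 1)).const_mul_atTop four_pos
    simpa [Function.comp_def] using
      (continuous_exp.tendsto 0).comp ((tendsto_const_nhds (x := (1 : ℝ))).div_atTop h4)
  have hlim := (tendsto_normCentralBinomSq.comp (tendsto_add_atTop_nat 1)).mul hexp
  rw [mul_one] at hlim
  exact antitone_normCentralBinomSq_mul_exp.le_of_tendsto hlim n

theorem log_pi_mul_normCentralBinomSq_neg {k : ℕ} (hk : k ≠ 0) :
    log (π * normCentralBinomSq k) < 0 := by
  refine log_neg (by have := normCentralBinomSq_pos hk; positivity) ?_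
  simpa [pi_ne_zero] using mul_lt_mul_of_pos_left (normCentralBinomSq_lt_inv_pi k) pi_pos

theorem neg_inv_four_mul_le_log_pi_mul_normCentralBinomSq {k : ℕ} (hk : k ≠ 0) :
    -(1 / (4 * k)) ≤ log (π * normCentralBinomSq k) := by
  rw [le_log_iff_exp_le (by have := normCentralBinomSq_pos hk; positivity)]
  calc exp (-(1 / (4 * k))) = exp (-(1 / (4 * k))) * (π * π⁻¹) := by simp [pi_ne_zero]
    _ ≤ exp (-(1 / (4 * k))) * (π * (normCentralBinomSq k * exp (1 / (4 * k)))) := by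
      gcongr; exact inv_pi_le_normCentralBinomSq_mul_exp hk
    _ = π * normCentralBinomSq k * exp (1 / (4 * k) + -(1 / (4 * k))) := by rw [exp_add]; ring
    _ = π * normCentralBinomSq k := by rw [add_neg_cancel, exp_zero, mul_one]

theorem logb_centralBinom {k : ℕ} (hk : k ≠ 0) :
    logb 2 (centralBinom k) =
      2 * k - 1 / 2 * logb 2 (π * k) + log (π * normCentralBinomSq k) / (2 * log 2) := by
  have hC : (0 : ℝ) < centralBinom k := by exact_mod_cast centralBinom_pos k
  have hk' : (0 : ℝ) < k := by positivity
  have hd := normCentralBinomSq_pos hk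
  have key : π * k * centralBinom k ^ 2 = 2 ^ (4 * k) * (π * normCentralBinomSq k) := by
    rw [normCentralBinomSq, pow_mul]
    field_simp
    norm_num
  have hlog := congrArg log key
  rw [log_mul (x := π * k) (by positivity) (by positivity), log_pow,
    log_mul (x := 2 ^ (4 * k)) (by positivity) (by positivity), log_pow] at hlog
  push_cast at hlog
  unfold logb
  rw [show log (centralBinom k) = (4 * k * log 2 + log (π * normCentralBinomSq k) - log (π * k)) / 2
    by linarith]
  field_simp
  ring

/-- For every positive integer `k`, the quantity `p_k = log₂ C(2k,k)` satisfies
`2k − (1/2) log₂(πk) − 1/(4k) < p_k < 2k − (1/2) log₂(πk)`. -/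
theorem pk_bounds (k : ℕ) (hk : 0 < k) :
    2 * (k : ℝ) - (1 / 2) * Real.logb 2 (Real.pi * k) - 1 / (4 * k) <
        Real.logb 2 (Nat.choose (2 * k) k) ∧
      Real.logb 2 (Nat.choose (2 * k) k) < 2 * (k : ℝ) - (1 / 2) * Real.logb 2 (Real.pi * k) := by
  rw [← Nat.centralBinom_eq_two_mul_choose, logb_centralBinom hk.ne']
  have hlog2 : 1 / 2 < log 2 := by linarith [log_two_gt_d9]
  have upper := log_pi_mul_normCentralBinomSq_neg hk.ne'
  have lower := neg_inv_four_mul_le_log_pi_mul_normCentralBinomSq hk.ne'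
  constructor
  · have hx : 0 < 1 / (4 * (k : ℝ)) := by positivity
    have : -(1 / (4 * k)) < log (π * normCentralBinomSq k) / (2 * log 2) := by
      rw [lt_div_iff₀ (by linarith)]
      nlinarith
    linarith
  · linarith [div_neg_of_neg_of_pos upper (by linarith : (0 : ℝ) < 2 * log 2)]
end

section
/- Let k be a positive integer, p_k := log₂ C(2k,k), and define f_k(x) := ∑_{j=0}^{k} C(k,j)² (1−x)^{p_k(k−j)/k} x^{p_k j/k}. Then f_k is twice differentiable on (0,1) and for every x ∈ (0,1) it satisfies the differential equation a_k(x) f_k''(x) + b_k(x) f_k'(x) + p_k c_k(x) f_k(x) = 0, where a_k(x) := (1−x)²x²((1−x)^{p_k/k} − x^{p_k/k})², b_k(x) := (1−x)x((1−x)^{p_k/k} − x^{p_k/k})·((1−x)^{p_k/k}(1+2(p_k−1)x) + x^{p_k/k}(1+2(p_k−1)(1−x))), and c_k(x) := (1−x)^{2p_k/k} x (1+(p_k−1)x) + x^{2p_k/k} (1−x)(1+(p_k−1)(1−x)) − (1−x)^{p_k/k} x^{p_k/k} (p_k − 2(p_k−1)(1−x)x). -/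
/-!
With `q = p/k` and `t = (x/(1-x))^q`, one has `f(x) = (1-x)^p F(t)` where
`F(y) = ∑ C(k,j)² y^j = ₂F₁(-k,-k;1;y)` satisfies the hypergeometric equation
`y(1-y)F'' + (1+(2k-1)y)F' = k²F`. Since `t' = q t/(x(1-x))`, the chain rule expresses `f'` and
`f''` through `F, F', F''` at `t`, and after clearing denominators the left side of the claimed
equation is `q² x^q ((1-x)^q - x^q) (1-x)^p` times the residual of that equation at `t`.
-/

open Finset Real

noncomputable def chooseSqPoly (k : ℕ) (y : ℝ) : ℝ :=
  ∑ j ∈ range (k + 1), (k.choose j : ℝ) ^ 2 * y ^ j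

noncomputable def chooseSqPolyDeriv (k : ℕ) (y : ℝ) : ℝ :=
  ∑ j ∈ range (k + 1), (k.choose j : ℝ) ^ 2 * (j * y ^ (j - 1))

noncomputable def chooseSqPolyDeriv2 (k : ℕ) (y : ℝ) : ℝ :=
  ∑ j ∈ range (k + 1), (k.choose j : ℝ) ^ 2 * (j * (j - 1) * y ^ (j - 2))

theorem hasDerivAt_chooseSqPoly (k : ℕ) (y : ℝ) :
    HasDerivAt (chooseSqPoly k) (chooseSqPolyDeriv k y) y :=
  HasDerivAt.fun_sum fun j _ => (hasDerivAt_pow j y).const_mul _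

theorem hasDerivAt_chooseSqPolyDeriv (k : ℕ) (y : ℝ) :
    HasDerivAt (chooseSqPolyDeriv k) (chooseSqPolyDeriv2 k y) y := by
  refine HasDerivAt.fun_sum fun j _ =>
    (((hasDerivAt_pow (j - 1) y).const_mul (j : ℝ)).const_mul _).congr_deriv ?_
  rcases j with _ | j
  · simp
  · rw [Nat.add_sub_cancel, Nat.cast_add_one, show j + 1 - 2 = j - 1 by omega]
    ring

theorem cast_choose_succ_right_eq (k i : ℕ) (hi : i < k) :
    (k.choose (i + 1) : ℝ) * (i + 1) = k.choose i * (k - i) := by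
  rw [← Nat.cast_sub hi.le]
  exact_mod_cast Nat.choose_succ_right_eq k i

theorem chooseSqPoly_ode (k : ℕ) (y : ℝ) :
    y * (1 - y) * chooseSqPolyDeriv2 k y + (1 + (2 * k - 1) * y) * chooseSqPolyDeriv k y =
      k ^ 2 * chooseSqPoly k y := by
  have regroup : y * (1 - y) * chooseSqPolyDeriv2 k y + (1 + (2 * k - 1) * y) *
      chooseSqPolyDeriv k y - k ^ 2 * chooseSqPoly k y =
        (∑ j ∈ range (k + 1), (k.choose j : ℝ) ^ 2 * (j ^ 2 * y ^ (j - 1))) -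
          ∑ j ∈ range (k + 1), (k.choose j : ℝ) ^ 2 * ((k - j) ^ 2 * y ^ j) := by
    simp only [chooseSqPoly, chooseSqPolyDeriv, chooseSqPolyDeriv2, mul_sum, ← sum_add_distrib,
      ← sum_sub_distrib]
    refine sum_congr rfl fun j _ => ?_
    rcases j with _ | _ | j
    · simp
    · simp only [zero_add, Nat.choose_one_right, Nat.cast_one, sub_self, mul_zero, pow_zero,
        mul_one, tsub_self, pow_one, one_pow, Nat.sub_eq_zero_of_le, Nat.one_le_ofNat]
      ring
    · rw [show j + 1 + 1 - 2 = j by omega]; push_cast; ring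
  have shift : ∑ j ∈ range (k + 1), (k.choose j : ℝ) ^ 2 * (j ^ 2 * y ^ (j - 1)) =
      ∑ j ∈ range (k + 1), (k.choose j : ℝ) ^ 2 * ((k - j) ^ 2 * y ^ j) := by
    rw [sum_range_succ' _ k, sum_range_succ]
    simp only [Nat.add_sub_cancel, Nat.choose_self, Nat.cast_zero, Nat.cast_one, sub_self, ne_eq,
      OfNat.ofNat_ne_zero, not_false_eq_true, zero_pow, mul_zero, zero_mul, add_zero]
    refine sum_congr rfl fun i hi => ?_
    push_cast
    linear_combination (k.choose (i + 1) * (i + 1) + k.choose i * (k - i) : ℝ) * y ^ i *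
      cast_choose_succ_right_eq k i (mem_range.mp hi)
  linarith

noncomputable def oddsRpow (q x : ℝ) : ℝ := (x / (1 - x)) ^ q

theorem hasDerivAt_oddsRpow (q : ℝ) {x : ℝ} (hx : x ∈ Set.Ioo 0 1) :
    HasDerivAt (oddsRpow q) (q * oddsRpow q x / (x * (1 - x))) x := by
  have h1x : 1 - x ≠ 0 := (sub_pos.mpr hx.2).ne'
  have hodds : x / (1 - x) ≠ 0 := div_ne_zero hx.1.ne' h1x
  have hdiv := (hasDerivAt_id x).div ((hasDerivAt_id x).const_sub 1) h1x
  refine ((hasDerivAt_rpow_const (p := q) (Or.inl hodds)).comp x hdiv).congr_deriv ?_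
  rw [oddsRpow, rpow_sub_one hodds]
  simp only [id_eq]
  field_simp
  ring

theorem hasDerivAt_one_sub_rpow (r : ℝ) {x : ℝ} (hx : x < 1) :
    HasDerivAt (fun y => (1 - y) ^ r) (-(r * (1 - x) ^ r / (1 - x))) x := by
  have h1x : 1 - x ≠ 0 := (sub_pos.mpr hx).ne'
  refine ((hasDerivAt_rpow_const (p := r) (Or.inl h1x)).comp x
    ((hasDerivAt_id x).const_sub 1)).congr_deriv ?_
  rw [rpow_sub_one h1x]
  ring

section PowerSubst

variable {F F' F'' : ℝ → ℝ} {r q x : ℝ}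

noncomputable def powerSubst (F : ℝ → ℝ) (r q x : ℝ) : ℝ := (1 - x) ^ r * F (oddsRpow q x)

noncomputable def powerSubstDeriv (F F' : ℝ → ℝ) (r q x : ℝ) : ℝ :=
  (1 - x) ^ r / (x * (1 - x)) *
    (q * oddsRpow q x * F' (oddsRpow q x) - r * x * F (oddsRpow q x))

noncomputable def powerSubstDeriv2 (F F' F'' : ℝ → ℝ) (r q x : ℝ) : ℝ :=
  (1 - x) ^ r / (x * (1 - x)) ^ 2 *
    ((2 * x - 1 - r * x) * (q * oddsRpow q x * F' (oddsRpow q x) - r * x * F (oddsRpow q x)) +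
      q * oddsRpow q x * (q * F' (oddsRpow q x) + q * oddsRpow q x * F'' (oddsRpow q x) -
        r * x * F' (oddsRpow q x)) -
      r * x * (1 - x) * F (oddsRpow q x))

theorem hasDerivAt_powerSubst (hF : ∀ y, HasDerivAt F (F' y) y) (hx : x ∈ Set.Ioo 0 1) :
    HasDerivAt (powerSubst F r q) (powerSubstDeriv F F' r q x) x := by
  have hx0 : x ≠ 0 := hx.1.ne'
  have h1x : 1 - x ≠ 0 := (sub_pos.mpr hx.2).ne'
  refine ((hasDerivAt_one_sub_rpow r hx.2).mul
    ((hF _).comp x (hasDerivAt_oddsRpow q hx))).congr_deriv ?_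
  rw [powerSubstDeriv, Function.comp_apply]
  field_simp
  ring

theorem hasDerivAt_powerSubstDeriv (hF : ∀ y, HasDerivAt F (F' y) y)
    (hF' : ∀ y, HasDerivAt F' (F'' y) y) (hx : x ∈ Set.Ioo 0 1) :
    HasDerivAt (powerSubstDeriv F F' r q) (powerSubstDeriv2 F F' F'' r q x) x := by
  have hx0 : x ≠ 0 := hx.1.ne'
  have h1x : 1 - x ≠ 0 := (sub_pos.mpr hx.2).ne'
  have ht := hasDerivAt_oddsRpow q hx
  have hweight := (hasDerivAt_one_sub_rpow r hx.2).div
    ((hasDerivAt_id x).mul ((hasDerivAt_id x).const_sub 1)) (mul_ne_zero hx0 h1x)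
  have hbracket := (((ht.const_mul q).mul ((hF' _).comp x ht)).sub
    (((hasDerivAt_id x).const_mul r).mul ((hF _).comp x ht)))
  refine (hweight.mul hbracket).congr_deriv ?_
  rw [powerSubstDeriv2]
  simp only [Pi.mul_apply, Pi.div_apply, Pi.sub_apply, Function.comp_apply, id_eq]
  field_simp
  ring

theorem powerSubst_ode {p n : ℝ} (hn : n ≠ 0) (hx : x ∈ Set.Ioo 0 1)
    (hode : oddsRpow (p / n) x * (1 - oddsRpow (p / n) x) * F'' (oddsRpow (p / n) x) +
        (1 + (2 * n - 1) * oddsRpow (p / n) x) * F' (oddsRpow (p / n) x) =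
      n ^ 2 * F (oddsRpow (p / n) x)) :
    ((1 - x) ^ 2 * x ^ 2 * ((1 - x) ^ (p / n) - x ^ (p / n)) ^ 2) *
          powerSubstDeriv2 F F' F'' p (p / n) x +
        ((1 - x) * x * ((1 - x) ^ (p / n) - x ^ (p / n)) *
          ((1 - x) ^ (p / n) * (1 + 2 * (p - 1) * x) +
            x ^ (p / n) * (1 + 2 * (p - 1) * (1 - x)))) * powerSubstDeriv F F' p (p / n) x +
        p * ((1 - x) ^ (2 * p / n) * x * (1 + (p - 1) * x) +
          x ^ (2 * p / n) * (1 - x) * (1 + (p - 1) * (1 - x)) -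
          (1 - x) ^ (p / n) * x ^ (p / n) * (p - 2 * (p - 1) * (1 - x) * x)) *
          powerSubst F p (p / n) x = 0 := by
  obtain ⟨hx0, hx1⟩ := hx
  have h1x : 0 < 1 - x := sub_pos.mpr hx1
  obtain ⟨q, rfl⟩ : ∃ q, p = q * n := ⟨p / n, (div_mul_cancel₀ p hn).symm⟩
  have hodds : oddsRpow q x = x ^ q / (1 - x) ^ q := div_rpow hx0.le h1x.le q
  have hexp : 2 * (q * n) / n = q + q := by field_simp; ring
  rw [mul_div_cancel_right₀ q hn] at hode ⊢
  rw [hexp, rpow_add h1x, rpow_add hx0]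
  simp only [powerSubst, powerSubstDeriv, powerSubstDeriv2, hodds] at hode ⊢
  have hU : (1 - x) ^ q ≠ 0 := (rpow_pos_of_pos h1x q).ne'
  have hx0' : x ≠ 0 := hx0.ne'
  have h1x' : 1 - x ≠ 0 := h1x.ne'
  linear_combination (norm := skip) q ^ 2 * x ^ q * ((1 - x) ^ q - x ^ q) * (1 - x) ^ (q * n) * hode
  field_simp
  ring

end PowerSubst

theorem sum_eq_powerSubst_chooseSqPoly {k : ℕ} (hk : k ≠ 0) (p : ℝ) {x : ℝ}
    (hx : x ∈ Set.Ioo 0 1) :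
    ∑ j ∈ range (k + 1), (k.choose j : ℝ) ^ 2 * (1 - x) ^ (p * ((k : ℝ) - j) / k) *
      x ^ (p * (j : ℝ) / k) = powerSubst (chooseSqPoly k) p (p / k) x := by
  have h1x : 0 < 1 - x := sub_pos.mpr hx.2
  rw [powerSubst, chooseSqPoly, mul_sum]
  refine sum_congr rfl fun j _ => ?_
  have hexp : p * ((k : ℝ) - j) / k = p - p / k * j := by field_simp
  rw [oddsRpow, ← rpow_mul_natCast (div_pos hx.1 h1x).le, div_rpow hx.1.le h1x.le, hexp,
    rpow_sub h1x, mul_div_right_comm p]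
  have := (rpow_pos_of_pos h1x (p / k * j)).ne'
  field_simp

theorem fk_differential_equation_general (k : ℕ) (hk : 0 < k)
    (pk : ℝ)
    (f : ℝ → ℝ)
    (hf : ∀ x : ℝ, f x = ∑ j ∈ Finset.range (k + 1),
        (Nat.choose k j : ℝ) ^ 2 *
          (1 - x) ^ (pk * ((k : ℝ) - j) / k) * x ^ (pk * (j : ℝ) / k)) :
    ∀ x ∈ Set.Ioo (0 : ℝ) 1,
      DifferentiableAt ℝ f x ∧ DifferentiableAt ℝ (deriv f) x ∧
      ((1 - x) ^ 2 * x ^ 2 * ((1 - x) ^ (pk / k) - x ^ (pk / k)) ^ 2) *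
          deriv (deriv f) x +
        ((1 - x) * x * ((1 - x) ^ (pk / k) - x ^ (pk / k)) *
          ((1 - x) ^ (pk / k) * (1 + 2 * (pk - 1) * x) +
            x ^ (pk / k) * (1 + 2 * (pk - 1) * (1 - x)))) * deriv f x +
        pk * ((1 - x) ^ (2 * pk / k) * x * (1 + (pk - 1) * x) +
          x ^ (2 * pk / k) * (1 - x) * (1 + (pk - 1) * (1 - x)) -
          (1 - x) ^ (pk / k) * x ^ (pk / k) * (pk - 2 * (pk - 1) * (1 - x) * x)) * f x
        = 0 := by
  intro x hx
  have hfg : Set.EqOn f (powerSubst (chooseSqPoly k) pk (pk / k)) (Set.Ioo 0 1) :=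
    fun y hy => (hf y).trans (sum_eq_powerSubst_chooseSqPoly hk.ne' pk hy)
  have hf' (y : ℝ) (hy : y ∈ Set.Ioo 0 1) :
      HasDerivAt f (powerSubstDeriv (chooseSqPoly k) (chooseSqPolyDeriv k) pk (pk / k) y) y :=
    (hasDerivAt_powerSubst (hasDerivAt_chooseSqPoly k) hy).congr_of_eventuallyEq
      (hfg.eventuallyEq_of_mem (isOpen_Ioo.mem_nhds hy))
  have hf'' : HasDerivAt (deriv f) (powerSubstDeriv2 (chooseSqPoly k) (chooseSqPolyDeriv k)
      (chooseSqPolyDeriv2 k) pk (pk / k) x) x :=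
    (hasDerivAt_powerSubstDeriv (hasDerivAt_chooseSqPoly k) (hasDerivAt_chooseSqPolyDeriv k)
      hx).congr_of_eventuallyEq
      (Set.EqOn.eventuallyEq_of_mem (fun y hy => (hf' y hy).deriv) (isOpen_Ioo.mem_nhds hx))
  refine ⟨(hf' x hx).differentiableAt, hf''.differentiableAt, ?_⟩
  rw [hf''.deriv, (hf' x hx).deriv, hfg hx]
  exact powerSubst_ode (Nat.cast_ne_zero.mpr hk.ne') hx (chooseSqPoly_ode k _)

/-- For a positive integer `k`, `p_k = log₂ C(2k,k)`, and
`f_k(x) = ∑_{j=0}^{k} C(k,j)² (1−x)^{p_k(k−j)/k} x^{p_k j/k}`, the function `f_k`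
is twice differentiable on `(0,1)` and satisfies the differential equation
`a_k(x) f_k''(x) + b_k(x) f_k'(x) + p_k c_k(x) f_k(x) = 0` there. -/
theorem fk_differential_equation (k : ℕ) (hk : 0 < k)
    (pk : ℝ) (hpk : pk = Real.logb 2 (Nat.choose (2 * k) k))
    (f : ℝ → ℝ)
    (hf : ∀ x : ℝ, f x = ∑ j ∈ Finset.range (k + 1),
        (Nat.choose k j : ℝ) ^ 2 *
          (1 - x) ^ (pk * ((k : ℝ) - j) / k) * x ^ (pk * (j : ℝ) / k)) :
    ∀ x ∈ Set.Ioo (0 : ℝ) 1,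
      DifferentiableAt ℝ f x ∧ DifferentiableAt ℝ (deriv f) x ∧
      ((1 - x) ^ 2 * x ^ 2 * ((1 - x) ^ (pk / k) - x ^ (pk / k)) ^ 2) *
          deriv (deriv f) x +
        ((1 - x) * x * ((1 - x) ^ (pk / k) - x ^ (pk / k)) *
          ((1 - x) ^ (pk / k) * (1 + 2 * (pk - 1) * x) +
            x ^ (pk / k) * (1 + 2 * (pk - 1) * (1 - x)))) * deriv f x +
        pk * ((1 - x) ^ (2 * pk / k) * x * (1 + (pk - 1) * x) +
          x ^ (2 * pk / k) * (1 - x) * (1 + (pk - 1) * (1 - x)) -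
          (1 - x) ^ (pk / k) * x ^ (pk / k) * (pk - 2 * (pk - 1) * (1 - x) * x)) * f x
        = 0 :=
  fk_differential_equation_general k hk pk f hf
end

section
/- Let k ≥ 2 be an integer, p_k := log₂ C(2k,k), and define c_k(x) := (1−x)^{2p_k/k} x (1+(p_k−1)x) + x^{2p_k/k} (1−x)(1+(p_k−1)(1−x)) − (1−x)^{p_k/k} x^{p_k/k} (p_k − 2(p_k−1)(1−x)x) for x ∈ (0,1). Then c_k(x) < 0 for every x ∈ [1/10, 1/2). -/
/-!
Put `t = p/k`, `a = (1-x)^t`, `b = x^t`. As `x(1 + (p-1)x) + (1-x)(1 + (p-1)(1-x))` equals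
`p - 2(p-1)x(1-x)`, the expression factors as
`(a - b) (a x (1 + (p-1)x) - b (1-x)(1 + (p-1)(1-x)))`; for `x < 1/2` the first factor is
positive and the second is negative iff `logRatio (p-1) (t-1) x > 0`.

The derivative of `logRatio u θ` has the sign of `θ(1+u) - z(1-z)(u² + 2u - θu²)`, which
changes sign at most once on `[1/10, 1/2]`, from `+` to `-`. Since `logRatio u θ (1/2) = 0`, it is
positive on `[1/10, 1/2)` once it is positive at `1/10`, i.e. once `9^(p/k-1) (9+p) < 9p + 1`.
For `p ≥ k` this condition only gets stronger as `p` grows, so by `C(2k,k)² (3k+1) ≤ 16^k`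
it is enough to check it at `p = 2k - δ` for some `δ` with `2^(2δ) ≤ 3k + 1`. For `k ≥ 6` take
`δ = 21/10` and bound `9^(δ/k)` below by `1 + z + z²/2`; for `k ≤ 5` a rational lower bound of
`9^(δ/k)` suffices.
-/

open Real

namespace Nat

theorem two_pow_le_centralBinom (n : ℕ) : 2 ^ n ≤ centralBinom n := by
  induction n with
  | zero => simp
  | succ n ih =>
    refine Nat.le_of_mul_le_mul_left ?_ n.succ_pos
    calc (n + 1) * 2 ^ (n + 1) = 2 * (n + 1) * 2 ^ n := by ring
      _ ≤ 2 * (2 * n + 1) * centralBinom n := by gcongr; omega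
      _ = (n + 1) * centralBinom (n + 1) := (succ_mul_centralBinom_succ n).symm

theorem centralBinom_sq_mul_le_sixteen_pow (n : ℕ) :
    centralBinom n ^ 2 * (3 * n + 1) ≤ 16 ^ n := by
  induction n with
  | zero => simp
  | succ n ih =>
    have hpos : 0 < (n + 1) ^ 2 * (3 * n + 1) := by positivity
    refine Nat.le_of_mul_le_mul_left ?_ hpos
    calc (n + 1) ^ 2 * (3 * n + 1) * (centralBinom (n + 1) ^ 2 * (3 * (n + 1) + 1))
        = (3 * n + 1) * (3 * n + 4) * ((n + 1) * centralBinom (n + 1)) ^ 2 := by ring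
      _ = 4 * (2 * n + 1) ^ 2 * (3 * n + 4) * (centralBinom n ^ 2 * (3 * n + 1)) := by
          rw [succ_mul_centralBinom_succ]; ring
      _ ≤ 4 * (2 * n + 1) ^ 2 * (3 * n + 4) * 16 ^ n := by gcongr
      _ ≤ 16 * (n + 1) ^ 2 * (3 * n + 1) * 16 ^ n := by gcongr ?_ * _; nlinarith
      _ = (n + 1) ^ 2 * (3 * n + 1) * 16 ^ (n + 1) := by ring

end Nat

theorem le_logb_of_pow_le {b c e : ℝ} {n q : ℕ} (hb : 1 < b) (hq : 0 < q)
    (h : b ^ n ≤ c ^ q) (he : e * q = n) : e ≤ logb b c := by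
  have := logb_le_logb_of_le hb (pow_pos (by linarith) n) h
  rw [logb_pow, logb_pow, logb_self_eq_one hb, mul_one, ← he, mul_comm] at this
  exact le_of_mul_le_mul_left this (by positivity)

theorem le_rpow_of_pow_le {x y e : ℝ} {m q : ℕ} (hx : 0 ≤ x) (hy : 0 ≤ y) (hq : q ≠ 0)
    (h : x ^ q ≤ y ^ m) (he : e * q = m) : x ≤ y ^ e := by
  rwa [← pow_le_pow_iff_left₀ hx (by positivity) hq, ← rpow_mul_natCast hy, he, rpow_natCast]

theorem le_logb_centralBinom (n : ℕ) : (n : ℝ) ≤ logb 2 (n.centralBinom) :=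
  (le_logb_iff_rpow_le one_lt_two (by exact_mod_cast n.centralBinom_pos)).2 <| by
    rw [rpow_natCast]; exact_mod_cast n.two_pow_le_centralBinom

theorem logb_centralBinom_le (n : ℕ) :
    logb 2 (n.centralBinom) ≤ 2 * n - logb 2 (3 * n + 1) / 2 := by
  have h : ((n.centralBinom : ℝ)) ^ 2 * (3 * n + 1) ≤ 2 ^ (4 * n) := by
    rw [pow_mul]; exact_mod_cast Nat.centralBinom_sq_mul_le_sixteen_pow n
  have hC : (0 : ℝ) < n.centralBinom := by exact_mod_cast n.centralBinom_pos
  have := logb_le_logb_of_le one_lt_two (by positivity) h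
  rw [logb_mul (by positivity) (by positivity), logb_pow, logb_pow, logb_self_eq_one one_lt_two]
    at this
  push_cast at this
  linarith

theorem log_nine_gt : 2.19 < log 9 := by
  have h98 : 1 - (9 / 8 : ℝ)⁻¹ ≤ log (9 / 8) := one_sub_inv_le_log_of_pos (by norm_num)
  have h9 : log 9 = 3 * log 2 + log (9 / 8) := by
    rw [show (9 : ℝ) = 2 ^ 3 * (9 / 8) by norm_num, log_mul (by norm_num) (by norm_num), log_pow]
    norm_num
  linarith [log_two_gt_d9]

theorem one_add_two_mul_le_nine_rpow {y : ℝ} (hy : 0 ≤ y) : 1 + 2 * y ≤ 9 ^ y := by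
  rw [rpow_def_of_pos (by norm_num)]
  nlinarith [add_one_le_exp (log 9 * y), log_nine_gt]

def EndpointIneq (k p : ℝ) : Prop := 9 ^ (p / k - 1) * (9 + p) < 9 * p + 1

theorem EndpointIneq.of_le {k p p' : ℝ} (hk : 0 < k) (hkp : k ≤ p) (hpp' : p ≤ p')
    (h : EndpointIneq k p') : EndpointIneq k p := by
  unfold EndpointIneq at *
  obtain ⟨s, hs, rfl⟩ : ∃ s, 0 ≤ s ∧ p' = p + k * s :=
    ⟨(p' - p) / k, div_nonneg (sub_nonneg.2 hpp') hk.le, by field_simp; ring⟩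
  have hgrow : 9 ^ (p / k - 1) * (1 + 2 * s) * (9 + (p + k * s)) < 9 * (p + k * s) + 1 := by
    have hsplit : (9 : ℝ) ^ ((p + k * s) / k - 1) = 9 ^ (p / k - 1) * 9 ^ s := by
      rw [← rpow_add (by norm_num)]; congr 1; field_simp; ring
    refine lt_of_le_of_lt ?_ (hsplit ▸ h)
    have : 0 ≤ 9 + (p + k * s) := by nlinarith
    gcongr
    exact one_add_two_mul_le_nine_rpow hs
  -- `9^(p/k-1) (9 + p) ≥ 9p + 1` would contradict `hgrow`, as `(9p + 1)(9 + p + ks) ≥ 40k`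
  by_contra! hcon
  have hbig : 40 * k ≤ (9 * p + 1) * (9 + (p + k * s)) := by nlinarith
  have hpos : 0 ≤ (1 + 2 * s) * (9 + (p + k * s)) := by
    apply mul_nonneg <;> nlinarith
  nlinarith [mul_le_mul_of_nonneg_right hcon hpos, mul_nonneg hs (sub_nonneg.2 hbig)]

theorem EndpointIneq.of_le_rpow {k p R : ℝ} (hk : 0 < k) (hp : 0 ≤ p)
    (hR : R ≤ 9 ^ ((2 * k - p) / k)) (h : 9 * (9 + p) < R * (9 * p + 1)) :
    EndpointIneq k p := by
  have hB : (0 : ℝ) < 9 ^ ((2 * k - p) / k) := by positivity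
  have hprod : (9 : ℝ) ^ (p / k - 1) * 9 ^ ((2 * k - p) / k) = 9 := by
    rw [← rpow_add (by norm_num)]
    convert rpow_one (9 : ℝ) using 2
    field_simp; ring
  refine lt_of_mul_lt_mul_right ?_ hB.le
  calc 9 ^ (p / k - 1) * (9 + p) * 9 ^ ((2 * k - p) / k) = 9 * (9 + p) := by
        rw [mul_right_comm, hprod]
    _ < R * (9 * p + 1) := h
    _ ≤ 9 ^ ((2 * k - p) / k) * (9 * p + 1) := by gcongr
    _ = (9 * p + 1) * 9 ^ ((2 * k - p) / k) := mul_comm _ _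

theorem endpointIneq_large {k : ℝ} (hk : 6 ≤ k) : EndpointIneq k (2 * k - 21 / 10) := by
  have hk0 : 0 < k := by linarith
  set z : ℝ := 2.19 * (21 / 10) / k with hz
  have hz0 : 0 ≤ z := by positivity
  refine EndpointIneq.of_le_rpow (R := 1 + z + z ^ 2 / 2) hk0 (by linarith) ?_ ?_
  · have hZ : z ≤ log 9 * ((2 * k - (2 * k - 21 / 10)) / k) := by
      rw [hz, show 2 * k - (2 * k - 21 / 10) = 21 / 10 by ring, mul_div_assoc]
      exact mul_le_mul_of_nonneg_right log_nine_gt.le (by positivity)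
    calc 1 + z + z ^ 2 / 2 ≤ exp z := quadratic_le_exp_of_nonneg hz0
      _ ≤ _ := by rw [rpow_def_of_pos (by norm_num)]; exact exp_le_exp.2 hZ
  · rw [hz, div_pow, ← sub_pos]
    field_simp
    nlinarith

theorem endpointIneq_of_certificate {k δ R : ℝ} {n q m r : ℕ} (hk : 0 < k)
    (hδk : δ ≤ 2 * k) (hq : 0 < q) (hn : 2 ^ n ≤ (3 * k + 1) ^ q) (hδ : 2 * δ * q = n)
    (hR : 0 ≤ R) (hr : r ≠ 0) (hm : R ^ r ≤ 9 ^ m) (hδm : δ / k * r = m)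
    (h : 9 * (9 + (2 * k - δ)) < R * (9 * (2 * k - δ) + 1)) :
    2 * δ ≤ logb 2 (3 * k + 1) ∧ EndpointIneq k (2 * k - δ) := by
  refine ⟨le_logb_of_pow_le one_lt_two hq hn hδ, EndpointIneq.of_le_rpow hk (by linarith) ?_ h⟩
  rw [show 2 * k - (2 * k - δ) = δ by ring]
  exact le_rpow_of_pow_le hR (by norm_num) hr hm hδm

theorem endpointIneq_logb_centralBinom {k : ℕ} (hk : 2 ≤ k) :
    EndpointIneq k (logb 2 (k.centralBinom)) := by
  suffices ∃ δ : ℝ, 2 * δ ≤ logb 2 (3 * k + 1) ∧ EndpointIneq k (2 * k - δ) by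
    obtain ⟨δ, hδ, hE⟩ := this
    exact hE.of_le (by positivity) (le_logb_centralBinom k) (by linarith [logb_centralBinom_le k])
  rcases lt_or_ge k 6 with hk6 | hk6
  · interval_cases k
    · refine ⟨7 / 5, endpointIneq_of_certificate (n := 14) (q := 5) (R := 9 / 2) (m := 7)
        (r := 10) ?_ ?_ ?_ ?_ ?_ ?_ ?_ ?_ ?_ ?_⟩ <;> norm_num
    · refine ⟨8 / 5, endpointIneq_of_certificate (n := 16) (q := 5) (R := 3) (m := 8)
        (r := 15) ?_ ?_ ?_ ?_ ?_ ?_ ?_ ?_ ?_ ?_⟩ <;> norm_num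
    · refine ⟨9 / 5, endpointIneq_of_certificate (n := 18) (q := 5) (R := 5 / 2) (m := 9)
        (r := 20) ?_ ?_ ?_ ?_ ?_ ?_ ?_ ?_ ?_ ?_⟩ <;> norm_num
    · refine ⟨2, endpointIneq_of_certificate (n := 4) (q := 1) (R := 9 / 4) (m := 2)
        (r := 5) ?_ ?_ ?_ ?_ ?_ ?_ ?_ ?_ ?_ ?_⟩ <;> norm_num
  · refine ⟨21 / 10,
      le_logb_of_pow_le (n := 21) (q := 5) one_lt_two (by norm_num) ?_ (by norm_num),
      endpointIneq_large (by exact_mod_cast hk6)⟩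
    calc (2 ^ 21 : ℝ) ≤ 19 ^ 5 := by norm_num
      _ ≤ (3 * (k : ℝ) + 1) ^ 5 := by gcongr; norm_cast; omega

noncomputable def logRatio (u θ z : ℝ) : ℝ :=
  log (1 + u * (1 - z)) - log (1 + u * z) - θ * (log (1 - z) - log z)

theorem hasDerivAt_logRatio {u θ z : ℝ} (hu : 0 ≤ u) (hz₀ : 0 < z) (hz₁ : z < 1) :
    HasDerivAt (logRatio u θ)
      ((θ * (1 + u) - z * (1 - z) * (u ^ 2 + 2 * u - θ * u ^ 2)) /
        (z * (1 - z) * (1 + u + u ^ 2 * (z * (1 - z))))) z := by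
  have h₁ : 0 < 1 - z := by linarith
  have hA : 0 < 1 + u * (1 - z) := by positivity
  have hB : 0 < 1 + u * z := by positivity
  refine HasDerivAt.congr_deriv (f := logRatio u θ)
    ((((((hasDerivAt_id z).const_sub 1).const_mul u).const_add 1).log hA.ne').sub
      ((((hasDerivAt_id z).const_mul u).const_add 1).log hB.ne') |>.sub
      ((((hasDerivAt_id z).const_sub 1).log h₁.ne').sub (hasDerivAt_log hz₀.ne')
        |>.const_mul θ)) ?_
  simp only [id]
  field_simp
  ring

theorem logRatio_half (u θ : ℝ) : logRatio u θ (1 / 2) = 0 := by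
  norm_num [logRatio]

theorem sq_add_two_mul_sub_mul_sq_pos_of_le {u θ P : ℝ} (hu : 0 < u) (hP : 0 ≤ P)
    (h : θ * (1 + u) ≤ P * (u ^ 2 + 2 * u - θ * u ^ 2)) : 0 < u ^ 2 + 2 * u - θ * u ^ 2 := by
  by_contra! hK
  have hθ : θ ≤ 0 := by nlinarith [mul_nonpos_of_nonneg_of_nonpos hP hK]
  nlinarith [mul_nonpos_of_nonneg_of_nonpos (sq_nonneg u) hθ]

theorem logRatio_pos {u θ x : ℝ} (hu : 0 < u) (h₀ : 0 < logRatio u θ (1 / 10))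
    (hx₁ : 1 / 10 ≤ x) (hx₂ : x < 1 / 2) : 0 < logRatio u θ x := by
  set K := u ^ 2 + 2 * u - θ * u ^ 2
  set f' : ℝ → ℝ :=
    fun z ↦ (θ * (1 + u) - z * (1 - z) * K) / (z * (1 - z) * (1 + u + u ^ 2 * (z * (1 - z))))
  have hderiv : ∀ z, 0 < z → z < 1 → HasDerivAt (logRatio u θ) (f' z) z :=
    fun z hz₀ hz₁ ↦ hasDerivAt_logRatio hu.le hz₀ hz₁
  have hden : ∀ z, 0 < z → z < 1 → 0 < z * (1 - z) * (1 + u + u ^ 2 * (z * (1 - z))) := by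
    intro z hz₀ hz₁
    have : 0 < 1 - z := by linarith
    positivity
  have hcont : ContinuousOn (logRatio u θ) (Set.Icc (1 / 10) (1 / 2)) := fun z hz ↦
    (hderiv z (by linarith [hz.1]) (by linarith [hz.2])).continuousAt.continuousWithinAt
  have hPmono : ∀ z w : ℝ, z < w → w ≤ 1 / 2 → z * (1 - z) < w * (1 - w) :=
    fun z w hzw hw ↦ by nlinarith
  by_cases hN : θ * (1 + u) ≤ x * (1 - x) * K
  · have hK : 0 < K := sq_add_two_mul_sub_mul_sq_pos_of_le hu (by nlinarith) hN
    have hanti : StrictAntiOn (logRatio u θ) (Set.Icc x (1 / 2)) := by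
      refine strictAntiOn_of_hasDerivWithinAt_neg (f' := f') (convex_Icc _ _)
        (hcont.mono (Set.Icc_subset_Icc hx₁ le_rfl))
        (fun z hz ↦ ?_) (fun z hz ↦ ?_) <;> rw [interior_Icc] at hz
      · exact (hderiv z (by linarith [hz.1]) (by linarith [hz.2])).hasDerivWithinAt
      refine div_neg_of_neg_of_pos ?_ (hden z (by linarith [hz.1]) (by linarith [hz.2]))
      nlinarith [mul_lt_mul_of_pos_right (hPmono x z hz.1 hz.2.le) hK]
    rw [← logRatio_half u θ]
    exact hanti ⟨le_rfl, hx₂.le⟩ ⟨hx₂.le, le_rfl⟩ hx₂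
  · have hmono : MonotoneOn (logRatio u θ) (Set.Icc (1 / 10) x) := by
      refine monotoneOn_of_hasDerivWithinAt_nonneg (f' := f') (convex_Icc _ _)
        (hcont.mono (Set.Icc_subset_Icc le_rfl hx₂.le))
        (fun z hz ↦ ?_) (fun z hz ↦ ?_) <;> rw [interior_Icc] at hz
      · exact (hderiv z (by linarith [hz.1]) (by linarith [hz.2])).hasDerivWithinAt
      refine div_nonneg ?_ (hden z (by linarith [hz.1]) (by linarith [hz.2])).le
      by_contra! hz'
      have hK : 0 < K := sq_add_two_mul_sub_mul_sq_pos_of_le (P := z * (1 - z)) hu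
        (by nlinarith [hz.1, hz.2]) (by linarith)
      nlinarith [mul_lt_mul_of_pos_right (hPmono z x hz.2 hx₂.le) hK]
    exact h₀.trans_le (hmono ⟨le_rfl, hx₁⟩ ⟨hx₁, le_rfl⟩ hx₁)

theorem logRatio_one_tenth_pos {k p : ℝ} (hp : 0 ≤ p) (h : EndpointIneq k p) :
    0 < logRatio (p - 1) (p / k - 1) (1 / 10) := by
  have hlog := log_lt_log (by positivity) h
  rw [log_mul (by positivity) (by positivity), log_rpow (by norm_num)] at hlog
  have hnine : log (1 - 1 / 10) - log (1 / 10) = log 9 := by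
    rw [← log_div (by norm_num) (by norm_num)]; norm_num
  have hA : log (1 + (p - 1) * (1 - 1 / 10)) = log (9 * p + 1) - log 10 := by
    rw [← log_div (by positivity) (by norm_num)]; ring_nf
  have hB : log (1 + (p - 1) * (1 / 10)) = log (9 + p) - log 10 := by
    rw [← log_div (by positivity) (by norm_num)]; ring_nf
  rw [logRatio, hnine, hA, hB]
  linarith

theorem rpow_mul_lt_of_logRatio_pos {u t x : ℝ} (hu : 0 ≤ u) (hx₀ : 0 < x) (hx₁ : x < 1)
    (h : 0 < logRatio u (t - 1) x) :
    (1 - x) ^ t * (x * (1 + u * x)) < x ^ t * ((1 - x) * (1 + u * (1 - x))) := by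
  have h₁ : 0 < 1 - x := by linarith
  rw [← log_lt_log_iff (by positivity) (by positivity), log_mul (by positivity) (by positivity),
    log_mul (by positivity) (by positivity), log_mul (by positivity) (by positivity),
    log_mul (by positivity) (by positivity), log_rpow h₁, log_rpow hx₀]
  rw [logRatio] at h
  linarith

theorem ck_factor (a b x p : ℝ) :
    a ^ 2 * x * (1 + (p - 1) * x) + b ^ 2 * (1 - x) * (1 + (p - 1) * (1 - x)) -
      a * b * (p - 2 * (p - 1) * (1 - x) * x) =
    (a - b) * (a * (x * (1 + (p - 1) * x)) - b * ((1 - x) * (1 + (p - 1) * (1 - x)))) := by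
  ring

/-- For integer `k ≥ 2` and `p_k = log₂ C(2k,k)`, the coefficient function
`c_k(x) = (1−x)^{2p_k/k} x (1+(p_k−1)x) + x^{2p_k/k} (1−x)(1+(p_k−1)(1−x))
− (1−x)^{p_k/k} x^{p_k/k} (p_k − 2(p_k−1)(1−x)x)` is negative on `[1/10, 1/2)`. -/
theorem ck_negative (k : ℕ) (hk : 2 ≤ k)
    (pk : ℝ) (hpk : pk = Real.logb 2 (Nat.choose (2 * k) k))
    (x : ℝ) (hx : x ∈ Set.Ico (1 / 10 : ℝ) (1 / 2)) :
    (1 - x) ^ (2 * pk / k) * x * (1 + (pk - 1) * x) +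
      x ^ (2 * pk / k) * (1 - x) * (1 + (pk - 1) * (1 - x)) -
      (1 - x) ^ (pk / k) * x ^ (pk / k) * (pk - 2 * (pk - 1) * (1 - x) * x) < 0 := by
  obtain ⟨hx₁, hx₂⟩ := hx
  rw [← Nat.centralBinom_eq_two_mul_choose] at hpk
  have hkp : (k : ℝ) ≤ pk := hpk ▸ le_logb_centralBinom k
  have hk₀ : (2 : ℝ) ≤ k := by exact_mod_cast hk
  have hend : EndpointIneq k pk := hpk ▸ endpointIneq_logb_centralBinom hk
  have hF : 0 < logRatio (pk - 1) (pk / k - 1) x :=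
    logRatio_pos (by linarith) (logRatio_one_tenth_pos (by linarith) hend) hx₁ hx₂
  have hab : x ^ (pk / k) < (1 - x) ^ (pk / k) :=
    rpow_lt_rpow (by linarith) (by linarith) (div_pos (by linarith) (by linarith))
  have hXY := rpow_mul_lt_of_logRatio_pos (by linarith) (by linarith) (by linarith) hF
  rw [show 2 * pk / k = pk / k * (2 : ℕ) by push_cast; ring, rpow_mul_natCast (by linarith),
    rpow_mul_natCast (by linarith), ck_factor]
  exact mul_neg_of_pos_of_neg (sub_pos.2 hab) (sub_neg.2 hXY)
end

section
/- For every real t ∈ (0,1) one has 9^{1−t} ≤ 10 · (1−t)^{1−t} · t^{t}, where the powers are real powers. -/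
/-- For every real `t ∈ (0,1)` one has `9^{1−t} ≤ 10 (1−t)^{1−t} t^t`. -/
theorem nine_power_bound (t : ℝ) (ht : t ∈ Set.Ioo (0 : ℝ) 1) :
    (9 : ℝ) ^ (1 - t) ≤ 10 * (1 - t) ^ (1 - t) * t ^ t := by
  obtain ⟨ht0, ht1⟩ := ht
  have h1t : (0:ℝ) < 1 - t := by linarith
  have key := Real.geom_mean_le_arith_mean2_weighted (le_of_lt h1t) (le_of_lt ht0)
    (p₁ := (9/10) / (1-t)) (p₂ := (1/10) / t)
    (by positivity) (by positivity) (by ring)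
  have h2 : (1-t) * ((9/10) / (1-t)) + t * ((1/10) / t) = 1 := by
    field_simp; ring
  rw [h2] at key
  have e1 : ((9/10 : ℝ) / (1-t)) ^ (1-t) = (9:ℝ)^(1-t) / 10^(1-t) / (1-t)^(1-t) := by
    rw [Real.div_rpow (by norm_num) h1t.le, Real.div_rpow (by norm_num) (by norm_num)]
  have e2 : ((1/10 : ℝ) / t) ^ t = 1 / 10^t / t^t := by
    rw [Real.div_rpow (by norm_num) ht0.le, Real.div_rpow (by norm_num) (by norm_num),
      Real.one_rpow]
  rw [e1, e2] at key
  have h10 : (10:ℝ)^(1-t) * 10^t = 10 := by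
    rw [← Real.rpow_add (by norm_num)]; norm_num
  have ha : (0:ℝ) < (1-t)^(1-t) := Real.rpow_pos_of_pos h1t _
  have hb : (0:ℝ) < t^t := Real.rpow_pos_of_pos ht0 _
  have h10a : (0:ℝ) < (10:ℝ)^(1-t) := Real.rpow_pos_of_pos (by norm_num) _
  have h10b : (0:ℝ) < (10:ℝ)^t := Real.rpow_pos_of_pos (by norm_num) _
  rw [div_mul_div_comm, div_mul_div_comm, div_le_one (by positivity), mul_one, h10] at key
  rw [div_le_iff₀ (by norm_num : (0:ℝ) < 10)] at key
  linarith [key]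
end

section
/- For every positive integer k and all real numbers a, b ≥ 0, one has ∑_{j=0}^{k} C(k,j)² · a^{(2k−1)(k−j)/k} · b^{(2k−1)j/k} ≥ C(2k,k) · 2^{1−2k} · (a+b)^{2k−1}, with 0^0 interpreted as 1. Equivalently, the Whiteley mean 𝔐₂^{[k,k]}(x,y) := ((∑_{j=0}^{k} C(k,j)² x^{k−j} y^{j}) / C(2k,k))^{1/k} dominates the power mean with exponent k/(2k−1): 𝔐₂^{[k,k]}(x,y) ≥ ((x^{k/(2k−1)} + y^{k/(2k−1)})/2)^{(2k−1)/k} for all x, y ≥ 0. -/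
/-!
Put `N(s) = ∑ⱼ C(k,j)² sʲ` (`chooseSqPoly k`). By homogeneity and the substitution
`s = u^(2k-1)`, both inequalities reduce to `C(2k,k) ((1 + uᵏ)/2)^(2k-1) ≤ N(u^(2k-1))` for
`0 ≤ u ≤ 1`, an equality at `u = 1` by Vandermonde's identity. So it suffices that
`N(u^(2k-1)) / (1 + uᵏ)^(2k-1)` decreases on `[0, 1]`. Its derivative has the sign of
`g(u) = u^(k-1) (1 + uᵏ) N'(u^(2k-1)) - k N(u^(2k-1))` (`ratioDerivFactor k u`), and
`g(0) = -k < 0` once `k ≥ 2`. The polynomial `N` solves the hypergeometric equation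
`s(1-s) N'' + (1 + (2k-1)s) N' = k² N`; at a zero of `g` in `(0, 1)` this equation makes `g'` a
positive multiple of `(2k-1) u^(k-1) - ∑_{i<2k-1} uⁱ`, which is negative by AM-GM. Hence `g`
never crosses zero upwards and stays nonpositive.
-/

namespace WhiteleyMean

open Finset Polynomial

noncomputable def chooseSqPoly (k : ℕ) : ℝ[X] :=
  ∑ j ∈ range (k + 1), C ((k.choose j : ℝ) ^ 2) * X ^ j

lemma coeff_chooseSqPoly (k n : ℕ) : (chooseSqPoly k).coeff n = (k.choose n : ℝ) ^ 2 := by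
  rw [chooseSqPoly, finsetSum_coeff]
  simp only [coeff_C_mul_X_pow]
  rw [sum_ite_eq]
  split_ifs with h
  · rfl
  · rw [Nat.choose_eq_zero_of_lt (by simpa using h)]; simp

lemma succ_sq_mul_choose_sq (k j : ℕ) :
    ((j : ℝ) + 1) ^ 2 * (k.choose (j + 1) : ℝ) ^ 2
      = ((k : ℝ) - j) ^ 2 * (k.choose j : ℝ) ^ 2 := by
  rcases le_or_gt k j with h | h
  · rcases h.eq_or_lt with rfl | h
    · simp
    · simp [Nat.choose_eq_zero_of_lt h, Nat.choose_eq_zero_of_lt (h.trans (Nat.lt_succ_self j))]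
  · have hrec : (k.choose (j + 1) : ℝ) * (j + 1) = k.choose j * ((k : ℝ) - j) := by
      rw [← Nat.cast_sub h.le]; exact_mod_cast Nat.choose_succ_right_eq k j
    linear_combination ((k.choose (j + 1) : ℝ) * (j + 1) + k.choose j * ((k : ℝ) - j)) * hrec

lemma chooseSqPoly_ode (k : ℕ) :
    X * (1 - X) * derivative (derivative (chooseSqPoly k))
      + (1 + C (2 * (k : ℝ) - 1) * X) * derivative (chooseSqPoly k)
      = C ((k : ℝ) ^ 2) * chooseSqPoly k := by
  ext n
  have h := succ_sq_mul_choose_sq k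
  rcases n with _ | _ | n <;>
    simp only [mul_sub, sub_mul, add_mul, one_mul, mul_one, mul_assoc, coeff_add, coeff_sub,
      coeff_C_mul, coeff_X_mul, coeff_X_mul_zero, coeff_derivative, coeff_chooseSqPoly] <;>
    push_cast
  · linear_combination (norm := (push_cast; ring)) h 0
  · linear_combination (norm := (push_cast; ring)) h 1
  · linear_combination (norm := (push_cast; ring)) h (n + 2)

lemma eval_chooseSqPoly (k : ℕ) (s : ℝ) :
    (chooseSqPoly k).eval s = ∑ j ∈ range (k + 1), (k.choose j : ℝ) ^ 2 * s ^ j := by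
  simp [chooseSqPoly, eval_finsetSum]

lemma one_le_eval_chooseSqPoly (k : ℕ) {s : ℝ} (hs : 0 ≤ s) :
    1 ≤ (chooseSqPoly k).eval s := by
  rw [eval_chooseSqPoly]
  calc (1 : ℝ) = (k.choose 0 : ℝ) ^ 2 * s ^ 0 := by simp
    _ ≤ _ := single_le_sum (f := fun j ↦ (k.choose j : ℝ) ^ 2 * s ^ j)
        (fun j _ ↦ by positivity) (by simp)

lemma eval_one_chooseSqPoly (k : ℕ) : (chooseSqPoly k).eval 1 = ((2 * k).choose k : ℝ) := by
  simp [eval_chooseSqPoly, ← Nat.sum_range_choose_sq]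

lemma mul_pow_lt_geom_sum {u : ℝ} (hu0 : 0 < u) (hu1 : u ≠ 1) {m : ℕ} (hm : m ≠ 0) :
    (2 * m + 1 : ℝ) * u ^ m < ∑ i ∈ range (2 * m + 1), u ^ i := by
  induction m with
  | zero => exact absurd rfl hm
  | succ m ih =>
    rcases eq_or_ne m 0 with rfl | hm
    · have : 0 < (u - 1) ^ 2 := by positivity
      simp only [sum_range_succ, sum_range_zero]
      push_cast
      nlinarith
    · have hsum : ∑ i ∈ range (2 * (m + 1) + 1), u ^ i
          = 1 + u * ∑ i ∈ range (2 * m + 1), u ^ i + (u ^ (m + 1)) ^ 2 := by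
        rw [show 2 * (m + 1) + 1 = 2 * m + 1 + 1 + 1 by ring, sum_range_succ', sum_range_succ,
          mul_sum]
        simp only [pow_succ, pow_zero]
        ring_nf
      have hamgm : 2 * u ^ (m + 1) ≤ 1 + (u ^ (m + 1)) ^ 2 := by
        nlinarith [sq_nonneg (u ^ (m + 1) - 1)]
      rw [hsum]
      push_cast
      calc (2 * (m + 1 : ℝ) + 1) * u ^ (m + 1) = u * ((2 * m + 1) * u ^ m) + 2 * u ^ (m + 1) := by
            ring
        _ < u * ∑ i ∈ range (2 * m + 1), u ^ i + (1 + (u ^ (m + 1)) ^ 2) :=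
            add_lt_add_of_lt_of_le (mul_lt_mul_of_pos_left (ih hm) hu0) hamgm
        _ = _ := by ring

noncomputable def ratioDerivFactor (k : ℕ) (u : ℝ) : ℝ :=
  u ^ (k - 1) * (1 + u ^ k) * (derivative (chooseSqPoly k)).eval (u ^ (2 * k - 1))
    - k * (chooseSqPoly k).eval (u ^ (2 * k - 1))

lemma differentiable_ratioDerivFactor (k : ℕ) : Differentiable ℝ (ratioDerivFactor k) := by
  unfold ratioDerivFactor
  fun_prop

lemma deriv_ratioDerivFactor_mul_of_eq_zero (n : ℕ) {u : ℝ}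
    (hzero : ratioDerivFactor (n + 2) u = 0) :
    deriv (ratioDerivFactor (n + 2)) u * (u * (1 - u ^ (2 * n + 3)))
      = (n + 2) * u ^ (n + 1) * (derivative (chooseSqPoly (n + 2))).eval (u ^ (2 * n + 3))
        * (1 - u)
        * ((2 * (n + 1) + 1) * u ^ (n + 1) - ∑ i ∈ range (2 * (n + 1) + 1), u ^ i) := by
  have hs := hasDerivAt_pow (2 * n + 3) u
  have hD : HasDerivAt (ratioDerivFactor (n + 2)) _ u :=
    (((hasDerivAt_pow (n + 1) u).mul ((hasDerivAt_pow (n + 2) u).const_add 1)).mul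
      ((Polynomial.hasDerivAt (derivative (chooseSqPoly (n + 2))) _).comp u hs)).sub
      (((Polynomial.hasDerivAt (chooseSqPoly (n + 2)) _).comp u hs).const_mul ((n + 2 : ℕ) : ℝ))
  have hode := congrArg (eval (u ^ (2 * n + 3))) (chooseSqPoly_ode (n + 2))
  simp only [eval_add, eval_mul, eval_sub, eval_X, eval_one, eval_C] at hode
  rw [ratioDerivFactor, show 2 * (n + 2) - 1 = 2 * n + 3 by omega] at hzero
  rw [hD.deriv]
  simp only [Function.comp_apply, Pi.mul_apply, Nat.add_sub_cancel]
  push_cast at hode hzero ⊢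
  linear_combination (2 * n + 3) * u ^ (n + 1) * (1 + u ^ (n + 2)) * hode
    - (2 * n + 3) * (n + 2) * u ^ (n + 1) * (1 + u ^ (n + 2)) * hzero
    - (n + 2) * u ^ (n + 1) * (derivative (chooseSqPoly (n + 2))).eval (u ^ (2 * n + 3))
      * geom_sum_mul u (2 * (n + 1) + 1)

lemma deriv_ratioDerivFactor_neg {k : ℕ} (hk : 2 ≤ k) {u : ℝ} (hu0 : 0 < u) (hu1 : u < 1)
    (hzero : ratioDerivFactor k u = 0) : deriv (ratioDerivFactor k) u < 0 := by
  obtain ⟨n, rfl⟩ : ∃ n, k = n + 2 := ⟨k - 2, by omega⟩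
  have key := deriv_ratioDerivFactor_mul_of_eq_zero n hzero
  have hN1 : 0 < (derivative (chooseSqPoly (n + 2))).eval (u ^ (2 * n + 3)) := by
    have hN := one_le_eval_chooseSqPoly (n + 2) (pow_nonneg hu0.le (2 * n + 3))
    rw [ratioDerivFactor, show 2 * (n + 2) - 1 = 2 * n + 3 by omega] at hzero
    push_cast at hzero
    refine pos_of_mul_pos_right (a := u ^ (n + 1) * (1 + u ^ (n + 2))) ?_ (by positivity)
    nlinarith
  have hamgm := mul_pow_lt_geom_sum hu0 hu1.ne (m := n + 1) (by omega)
  push_cast at hamgm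
  have hpos : 0 < u * (1 - u ^ (2 * n + 3)) :=
    mul_pos hu0 (sub_pos.2 (pow_lt_one₀ hu0.le hu1 (by omega)))
  have hu1' := sub_pos.2 hu1
  have hc : 0 < (n + 2 : ℝ) * u ^ (n + 1)
      * (derivative (chooseSqPoly (n + 2))).eval (u ^ (2 * n + 3)) * (1 - u) := by positivity
  have hrhs := mul_neg_of_pos_of_neg hc (sub_neg.2 hamgm)
  rw [← key] at hrhs
  exact neg_of_mul_neg_left hrhs hpos.le

lemma ratioDerivFactor_nonpos {k : ℕ} (hk : 1 ≤ k) {u : ℝ} (hu : u ∈ Set.Icc 0 1) :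
    ratioDerivFactor k u ≤ 0 := by
  rcases hk.eq_or_lt with rfl | hk
  · simp [ratioDerivFactor, chooseSqPoly, sum_range_succ]
  have hf0 : ratioDerivFactor k 0 < 0 := by
    have := one_le_eval_chooseSqPoly k (le_refl (0 : ℝ))
    simp only [ratioDerivFactor, zero_pow (by omega : k - 1 ≠ 0),
      zero_pow (by omega : 2 * k - 1 ≠ 0), zero_mul, zero_sub, neg_neg_iff_pos]
    positivity
  have hdiff := differentiable_ratioDerivFactor k
  -- Negative at `0` and decreasing at each of its zeros, the function never becomes positive.
  refine image_le_of_deriv_right_lt_deriv_boundary (f' := deriv (ratioDerivFactor k))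
    (B := fun _ ↦ 0) (B' := fun _ ↦ 0) hdiff.continuous.continuousOn
    (fun x _ ↦ (hdiff x).hasDerivAt.hasDerivWithinAt) hf0.le (fun _ ↦ hasDerivAt_const _ _)
    (fun x hx hzero ↦ ?_) hu
  rcases hx.1.eq_or_lt with rfl | hx0
  · exact absurd hzero hf0.ne
  · exact deriv_ratioDerivFactor_neg hk hx0 hx.2 hzero

noncomputable def chooseSqRatio (k : ℕ) (u : ℝ) : ℝ :=
  (chooseSqPoly k).eval (u ^ (2 * k - 1)) / (1 + u ^ k) ^ (2 * k - 1)

lemma hasDerivAt_chooseSqRatio {k : ℕ} (hk : 1 ≤ k) {u : ℝ} (hu : 0 ≤ u) :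
    HasDerivAt (chooseSqRatio k)
      ((2 * k - 1) * u ^ (k - 1) * (1 + u ^ k) ^ (2 * k - 2) * ratioDerivFactor k u
        / ((1 + u ^ k) ^ (2 * k - 1)) ^ 2) u := by
  obtain ⟨m, rfl⟩ : ∃ m, k = m + 1 := ⟨k - 1, by omega⟩
  have hexp : 2 * (m + 1) - 1 = 2 * m + 1 := by omega
  have hs := hasDerivAt_pow (2 * m + 1) u
  have hD : HasDerivAt (chooseSqRatio (m + 1)) _ u :=
    ((Polynomial.hasDerivAt (chooseSqPoly (m + 1)) _).comp u hs).div
      (((hasDerivAt_pow (m + 1) u).const_add 1).pow (2 * m + 1)) (by positivity)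
  convert hD using 1
  simp only [ratioDerivFactor, hexp, Function.comp_apply, Nat.add_sub_cancel,
    show 2 * (m + 1) - 2 = 2 * m by omega]
  push_cast
  ring

lemma antitoneOn_chooseSqRatio {k : ℕ} (hk : 1 ≤ k) :
    AntitoneOn (chooseSqRatio k) (Set.Icc 0 1) := by
  refine antitoneOn_of_deriv_nonpos (convex_Icc 0 1)
    (fun u hu ↦ (hasDerivAt_chooseSqRatio hk hu.1).continuousAt.continuousWithinAt)
    (fun u hu ↦ ?_) (fun u hu ↦ ?_) <;> rw [interior_Icc] at hu
  · exact (hasDerivAt_chooseSqRatio hk hu.1.le).differentiableAt.differentiableWithinAt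
  · rw [(hasDerivAt_chooseSqRatio hk hu.1.le).deriv]
    have : (1 : ℝ) ≤ 2 * k - 1 := by
      have : (1 : ℝ) ≤ k := by exact_mod_cast hk
      linarith
    have := hu.1.le
    exact div_nonpos_of_nonpos_of_nonneg (mul_nonpos_of_nonneg_of_nonpos (by positivity)
      (ratioDerivFactor_nonpos hk (Set.Ioo_subset_Icc_self hu))) (by positivity)

lemma choose_mul_pow_le_eval_chooseSqPoly {k : ℕ} (hk : 1 ≤ k) {u : ℝ}
    (hu : u ∈ Set.Icc 0 1) :
    ((2 * k).choose k : ℝ) * ((1 + u ^ k) / 2) ^ (2 * k - 1)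
      ≤ (chooseSqPoly k).eval (u ^ (2 * k - 1)) := by
  have h := antitoneOn_chooseSqRatio hk hu ⟨zero_le_one, le_rfl⟩ hu.2
  have := hu.1
  simp only [chooseSqRatio, one_pow, eval_one_chooseSqPoly, one_add_one_eq_two] at h
  rw [div_le_div_iff₀ (by positivity) (by positivity)] at h
  rw [div_pow, mul_div_assoc', div_le_iff₀ (by positivity)]
  exact h

lemma sum_choose_sq_mul_pow_comm (k : ℕ) (x y : ℝ) :
    ∑ j ∈ range (k + 1), (k.choose j : ℝ) ^ 2 * x ^ (k - j) * y ^ j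
      = ∑ j ∈ range (k + 1), (k.choose j : ℝ) ^ 2 * y ^ (k - j) * x ^ j := by
  rw [← sum_range_reflect]
  refine sum_congr rfl fun j hj ↦ ?_
  have hj : j ≤ k := Nat.lt_succ_iff.mp (mem_range.mp hj)
  rw [Nat.add_sub_cancel, Nat.choose_symm hj, Nat.sub_sub_self hj, mul_right_comm]

lemma sum_choose_sq_mul_pow_mul (k : ℕ) (x s : ℝ) :
    ∑ j ∈ range (k + 1), (k.choose j : ℝ) ^ 2 * x ^ (k - j) * (x * s) ^ j
      = x ^ k * (chooseSqPoly k).eval s := by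
  rw [eval_chooseSqPoly, mul_sum]
  refine sum_congr rfl fun j hj ↦ ?_
  rw [mul_pow, ← pow_sub_mul_pow x (Nat.lt_succ_iff.mp (mem_range.mp hj))]
  ring

lemma choose_mul_mean_pow_le_sum {k : ℕ} (hk : 1 ≤ k) {α β : ℝ} (hα : 0 ≤ α)
    (hβ : 0 ≤ β) :
    ((2 * k).choose k : ℝ) * ((α ^ k + β ^ k) / 2) ^ (2 * k - 1)
      ≤ ∑ j ∈ range (k + 1), (k.choose j : ℝ) ^ 2 * (α ^ (2 * k - 1)) ^ (k - j)
          * (β ^ (2 * k - 1)) ^ j := by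
  wlog hβα : β ≤ α generalizing α β
  · rw [sum_choose_sq_mul_pow_comm, add_comm]
    exact this hβ hα (le_of_not_ge hβα)
  have hu : β / α ∈ Set.Icc 0 1 := ⟨div_nonneg hβ hα, div_le_one_of_le₀ hβα hα⟩
  have hβ' : β = α * (β / α) := by
    rcases hα.eq_or_lt with rfl | hα
    · simp [le_antisymm hβα hβ]
    · field_simp
  rw [hβ', mul_pow, mul_pow, sum_choose_sq_mul_pow_mul, ← mul_one_add, mul_div_assoc, mul_pow,
    ← pow_mul, ← pow_mul, mul_comm k, mul_left_comm]
  exact mul_le_mul_of_nonneg_left (choose_mul_pow_le_eval_chooseSqPoly hk hu) (by positivity)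

lemma rpow_inv_natCast_pow_eq {x : ℝ} (hx : 0 ≤ x) (d p : ℕ) :
    (x ^ ((d : ℝ)⁻¹)) ^ p = x ^ ((p : ℝ) / d) := by
  rw [← Real.rpow_natCast, ← Real.rpow_mul hx, inv_mul_eq_div]

lemma choose_mul_two_rpow_mul_add_rpow_le {k : ℕ} (hk : 1 ≤ k) {a b : ℝ} (ha : 0 ≤ a)
    (hb : 0 ≤ b) :
    ((2 * k).choose k : ℝ) * (2 : ℝ) ^ (1 - 2 * (k : ℝ)) * (a + b) ^ (2 * (k : ℝ) - 1)
      ≤ ∑ j ∈ range (k + 1), (k.choose j : ℝ) ^ 2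
          * a ^ ((2 * (k : ℝ) - 1) * ((k : ℝ) - j) / k)
          * b ^ ((2 * (k : ℝ) - 1) * (j : ℝ) / k) := by
  have hn : (2 * (k : ℝ) - 1) = ((2 * k - 1 : ℕ) : ℝ) := by
    push_cast [Nat.cast_sub (by omega : 1 ≤ 2 * k)]; ring
  calc ((2 * k).choose k : ℝ) * (2 : ℝ) ^ (1 - 2 * (k : ℝ)) * (a + b) ^ (2 * (k : ℝ) - 1)
      = ((2 * k).choose k : ℝ)
          * (((a ^ (k : ℝ)⁻¹) ^ k + (b ^ (k : ℝ)⁻¹) ^ k) / 2) ^ (2 * k - 1) := by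
        rw [Real.rpow_inv_natCast_pow ha (by omega), Real.rpow_inv_natCast_pow hb (by omega),
          show 1 - 2 * (k : ℝ) = -(2 * k - 1) by ring, Real.rpow_neg zero_le_two, hn,
          Real.rpow_natCast, Real.rpow_natCast, div_pow]
        ring
    _ ≤ _ := choose_mul_mean_pow_le_sum hk (by positivity) (by positivity)
    _ = _ := sum_congr rfl fun j hj ↦ by
        have hj : j ≤ k := Nat.lt_succ_iff.mp (mem_range.mp hj)
        rw [← pow_mul, ← pow_mul, rpow_inv_natCast_pow_eq ha, rpow_inv_natCast_pow_eq hb]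
        push_cast [Nat.cast_sub (by omega : 1 ≤ 2 * k), Nat.cast_sub hj]
        rfl

noncomputable def whiteleyMean (k : ℕ) (x y : ℝ) : ℝ :=
  ((∑ j ∈ range (k + 1), (k.choose j : ℝ) ^ 2 * x ^ (k - j) * y ^ j) / (2 * k).choose k)
    ^ (1 / (k : ℝ))

noncomputable def powerMean (r x y : ℝ) : ℝ := ((x ^ r + y ^ r) / 2) ^ (1 / r)

lemma powerMean_le_whiteleyMean {k : ℕ} (hk : 1 ≤ k) {x y : ℝ} (hx : 0 ≤ x) (hy : 0 ≤ y) :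
    powerMean (k / (2 * k - 1)) x y ≤ whiteleyMean k x y := by
  have hn : (2 * (k : ℝ) - 1) = ((2 * k - 1 : ℕ) : ℝ) := by
    push_cast [Nat.cast_sub (by omega : 1 ≤ 2 * k)]; ring
  have hmean := choose_mul_mean_pow_le_sum hk (Real.rpow_nonneg hx ((2 * k - 1 : ℕ) : ℝ)⁻¹)
    (Real.rpow_nonneg hy ((2 * k - 1 : ℕ) : ℝ)⁻¹)
  rw [Real.rpow_inv_natCast_pow hx (by omega), Real.rpow_inv_natCast_pow hy (by omega),
    rpow_inv_natCast_pow_eq hx, rpow_inv_natCast_pow_eq hy, ← hn] at hmean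
  have hB : 0 ≤ (x ^ ((k : ℝ) / (2 * k - 1)) + y ^ ((k : ℝ) / (2 * k - 1))) / 2 := by
    positivity
  have hexp : (2 * (k : ℝ) - 1) / k = ((2 * k - 1 : ℕ) : ℝ) * (1 / k) := by rw [← hn]; ring
  rw [powerMean, whiteleyMean, one_div_div, hexp, Real.rpow_mul hB, Real.rpow_natCast]
  have hC : (0 : ℝ) < (2 * k).choose k := by exact_mod_cast Nat.choose_pos (by omega)
  exact Real.rpow_le_rpow (by positivity) ((le_div_iff₀' hC).2 hmean) (by positivity)

end WhiteleyMean

/-- For every positive integer `k` and `a, b ≥ 0`,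
`∑_{j=0}^{k} C(k,j)² a^{(2k−1)(k−j)/k} b^{(2k−1)j/k} ≥ C(2k,k) 2^{1−2k} (a+b)^{2k−1}`;
equivalently, the Whiteley mean `𝔐₂^{[k,k]}(x,y)` dominates the power mean with
exponent `k/(2k−1)` for all `x, y ≥ 0`. -/
theorem whiteley_mean_lower_bound (k : ℕ) (hk : 0 < k) :
    (∀ a b : ℝ, 0 ≤ a → 0 ≤ b →
      ∑ j ∈ Finset.range (k + 1),
          (Nat.choose k j : ℝ) ^ 2 *
            a ^ ((2 * (k : ℝ) - 1) * ((k : ℝ) - j) / k) *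
            b ^ ((2 * (k : ℝ) - 1) * (j : ℝ) / k)
        ≥ (Nat.choose (2 * k) k : ℝ) * (2 : ℝ) ^ (1 - 2 * (k : ℝ)) *
            (a + b) ^ (2 * (k : ℝ) - 1)) ∧
    (∀ x y : ℝ, 0 ≤ x → 0 ≤ y →
      ((∑ j ∈ Finset.range (k + 1),
          (Nat.choose k j : ℝ) ^ 2 * x ^ (k - j) * y ^ j) / (Nat.choose (2 * k) k : ℝ))
          ^ (1 / (k : ℝ))
        ≥ ((x ^ ((k : ℝ) / (2 * (k : ℝ) - 1)) + y ^ ((k : ℝ) / (2 * (k : ℝ) - 1))) / 2)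
            ^ ((2 * (k : ℝ) - 1) / k)) := by
  refine ⟨fun a b ha hb ↦ WhiteleyMean.choose_mul_two_rpow_mul_add_rpow_le hk ha hb,
    fun x y hx hy ↦ ?_⟩
  have := WhiteleyMean.powerMean_le_whiteleyMean hk hx hy
  rwa [WhiteleyMean.powerMean, WhiteleyMean.whiteleyMean, one_div_div] at this
end

section
/- Let k ≥ 2 be an integer and define c̃_k(x) := (1−x)^{4−2/k} x (1+2(k−1)x) + x^{4−2/k} (1−x)(1+2(k−1)(1−x)) − (1−x)^{2−1/k} x^{2−1/k} (2k−1 − 4(k−1)(1−x)x) for x ∈ (0,1). Then c̃_k(x) > 0 for every x ∈ (0, 1/2). Equivalently, for every real z > 1 one has (z−1)(z^{2k−1}−1) · ∑_{i=1}^{k−1} (z^i + z^{−i} − 2) > 0. -/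
/-!
With `e = 2 - 1/k`, `u = (1-x)^e` and `v = x^e`, the function `c̃_k` factors as
`(u - v) * (x (1 + 2(k-1)x) u - (1-x)(1 + 2(k-1)(1-x)) v)`. The first factor is positive since
`x < 1 - x`. For the second, write `1 - x = p^k`, `x = q^k` with `q < p`; using `p^k + q^k = 1`
it becomes `p^k q^k F(p, q)` with `F(p, q) = p^(2n+1) - q^(2n+1) - (2n+1) p^n q^n (p - q)`,
`n = k - 1`. Dividing `F` by `p - q` leaves `∑ p^j q^(2n-j) - (2n+1) p^n q^n`, which is positive
by AM-GM applied to the pairs of terms `j` and `2n - j`.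

The second assertion is elementary: every summand `z^i + z^(-i) - 2 = (z^i - 1)^2 / z^i` is
positive for `z > 1`.
-/

open Finset

section AMGM

variable {p q : ℝ} {n : ℕ}

lemma two_mul_pow_mul_pow_le_add (hp : 0 ≤ p) (hq : 0 ≤ q) {j : ℕ} (hj : j ≤ 2 * n) :
    2 * (p ^ n * q ^ n) ≤ p ^ j * q ^ (2 * n - j) + p ^ (2 * n - j) * q ^ j := by
  have hprod : (p ^ j * q ^ (2 * n - j)) * (p ^ (2 * n - j) * q ^ j) = (p ^ n * q ^ n) ^ 2 := by
    rw [mul_mul_mul_comm, ← pow_add, mul_comm (q ^ _), ← pow_add, Nat.add_sub_cancel' hj,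
      mul_pow, ← pow_mul, ← pow_mul, mul_comm n]
  nlinarith [sq_nonneg (p ^ j * q ^ (2 * n - j) - p ^ (2 * n - j) * q ^ j),
    mul_nonneg (pow_nonneg hp j) (pow_nonneg hq (2 * n - j)),
    mul_nonneg (pow_nonneg hp (2 * n - j)) (pow_nonneg hq j),
    mul_nonneg (pow_nonneg hp n) (pow_nonneg hq n)]

lemma mul_pow_mul_pow_lt_geom_sum₂ (hp : 0 ≤ p) (hq : 0 ≤ q) (hpq : p ≠ q) (hn : n ≠ 0) :
    (2 * n + 1) * (p ^ n * q ^ n) < ∑ j ∈ range (2 * n + 1), p ^ j * q ^ (2 * n - j) := by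
  have hreflect : ∑ j ∈ range (2 * n + 1), p ^ (2 * n - j) * q ^ j =
      ∑ j ∈ range (2 * n + 1), p ^ j * q ^ (2 * n - j) := by
    rw [← sum_range_reflect]
    refine sum_congr rfl fun j hj => ?_
    rw [Nat.add_sub_cancel, Nat.sub_sub_self (Nat.le_of_lt_succ (mem_range.1 hj))]
  have hends : 2 * (p ^ n * q ^ n) < p ^ 0 * q ^ (2 * n - 0) + p ^ (2 * n - 0) * q ^ 0 := by
    have hne : p ^ n ≠ q ^ n := fun h => hpq ((pow_left_inj₀ hp hq hn).1 h)
    have hsq := sq_pos_of_ne_zero (sub_ne_zero.2 hne)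
    simp only [pow_zero, one_mul, mul_one, Nat.sub_zero, pow_mul']
    nlinarith
  have hlt := sum_lt_sum (fun j hj => two_mul_pow_mul_pow_le_add hp hq
      (Nat.le_of_lt_succ (mem_range.1 hj))) ⟨0, mem_range.2 (by omega), hends⟩
  rw [sum_add_distrib, hreflect, sum_const, card_range, nsmul_eq_mul] at hlt
  push_cast at hlt
  linarith

lemma sub_mul_pow_mul_pow_pos (hq : 0 ≤ q) (hqp : q < p) (hn : n ≠ 0) :
    0 < p ^ (2 * n + 1) - q ^ (2 * n + 1) - (2 * n + 1) * (p ^ n * q ^ n) * (p - q) := by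
  have hgeom := geom_sum₂_mul p q (2 * n + 1)
  rw [Nat.add_sub_cancel] at hgeom
  rw [← hgeom, ← sub_mul]
  exact mul_pos (sub_pos.2 (mul_pow_mul_pow_lt_geom_sum₂ (hq.trans hqp.le) hq hqp.ne' hn))
    (sub_pos.2 hqp)

end AMGM

open Real

noncomputable def ckTilde (k x : ℝ) : ℝ :=
  (1 - x) ^ (4 - 2 / k) * x * (1 + 2 * (k - 1) * x) +
    x ^ (4 - 2 / k) * (1 - x) * (1 + 2 * (k - 1) * (1 - x)) -
    (1 - x) ^ (2 - 1 / k) * x ^ (2 - 1 / k) * (2 * k - 1 - 4 * (k - 1) * (1 - x) * x)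

lemma ckTilde_eq_mul (k : ℝ) {x : ℝ} (hx0 : 0 < x) (hx1 : x < 1) :
    ckTilde k x = ((1 - x) ^ (2 - 1 / k) - x ^ (2 - 1 / k)) *
      (x * (1 + 2 * (k - 1) * x) * (1 - x) ^ (2 - 1 / k) -
        (1 - x) * (1 + 2 * (k - 1) * (1 - x)) * x ^ (2 - 1 / k)) := by
  have hsplit : (4 - 2 / k) = (2 - 1 / k) + (2 - 1 / k) := by ring
  rw [ckTilde, hsplit, rpow_add hx0, rpow_add (sub_pos.2 hx1)]
  ring

lemma rpow_two_sub_inv_eq_pow {y : ℝ} (hy : 0 ≤ y) (n : ℕ) :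
    y ^ (2 - 1 / ((n + 1 : ℕ) : ℝ)) = (y ^ ((n + 1 : ℕ) : ℝ)⁻¹) ^ (2 * n + 1) := by
  rw [← rpow_natCast _ (2 * n + 1), ← rpow_mul hy]
  congr 1
  push_cast
  field_simp
  ring

lemma ckTilde_second_factor_pos {k : ℕ} (hk : 2 ≤ k) {x : ℝ} (hx : x ∈ Set.Ioo (0 : ℝ) (1 / 2)) :
    0 < x * (1 + 2 * ((k : ℝ) - 1) * x) * (1 - x) ^ (2 - 1 / (k : ℝ)) -
        (1 - x) * (1 + 2 * ((k : ℝ) - 1) * (1 - x)) * x ^ (2 - 1 / (k : ℝ)) := by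
  obtain ⟨hx0, hx2⟩ := hx
  obtain ⟨n, rfl⟩ : ∃ n, k = n + 1 := ⟨k - 1, by omega⟩
  have hn : n ≠ 0 := by omega
  obtain ⟨p, hp, hpk, hpe⟩ : ∃ p, 0 ≤ p ∧ p ^ (n + 1) = 1 - x ∧
      (1 - x) ^ (2 - 1 / ((n + 1 : ℕ) : ℝ)) = p ^ (2 * n + 1) :=
    ⟨_, rpow_nonneg (by linarith) _, rpow_inv_natCast_pow (by linarith) n.succ_ne_zero,
      rpow_two_sub_inv_eq_pow (by linarith) n⟩
  obtain ⟨q, hq, hqk, hqe⟩ : ∃ q, 0 < q ∧ q ^ (n + 1) = x ∧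
      x ^ (2 - 1 / ((n + 1 : ℕ) : ℝ)) = q ^ (2 * n + 1) :=
    ⟨_, rpow_pos_of_pos hx0 _, rpow_inv_natCast_pow hx0.le n.succ_ne_zero,
      rpow_two_sub_inv_eq_pow hx0.le n⟩
  have hqp : q < p := lt_of_pow_lt_pow_left₀ (n + 1) hp (by linarith)
  have hpq : p ^ (n + 1) + q ^ (n + 1) = 1 := by linarith
  rw [hpe, hqe, ← hpk, ← hqk]
  have hfactor : q ^ (n + 1) * (1 + 2 * (((n + 1 : ℕ) : ℝ) - 1) * q ^ (n + 1)) * p ^ (2 * n + 1) -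
      p ^ (n + 1) * (1 + 2 * (((n + 1 : ℕ) : ℝ) - 1) * p ^ (n + 1)) * q ^ (2 * n + 1) =
      p ^ (n + 1) * q ^ (n + 1) *
        (p ^ (2 * n + 1) - q ^ (2 * n + 1) - (2 * n + 1) * (p ^ n * q ^ n) * (p - q)) := by
    push_cast
    linear_combination (p ^ (n + 1) * q ^ (2 * n + 1) - q ^ (n + 1) * p ^ (2 * n + 1)) * hpq
  rw [hfactor]
  have hp0 : 0 < p := hq.trans hqp
  exact mul_pos (by positivity) (sub_mul_pow_mul_pow_pos hq.le hqp hn)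

lemma ckTilde_pos {k : ℕ} (hk : 2 ≤ k) {x : ℝ} (hx : x ∈ Set.Ioo (0 : ℝ) (1 / 2)) :
    0 < ckTilde k x := by
  obtain ⟨hx0, hx2⟩ := hx
  have he : 0 < 2 - 1 / (k : ℝ) := by
    have : 1 / (k : ℝ) ≤ 1 := div_le_one_of_le₀ (by exact_mod_cast (by omega : 1 ≤ k)) k.cast_nonneg
    linarith
  rw [ckTilde_eq_mul _ hx0 (by linarith)]
  exact mul_pos (sub_pos.2 (rpow_lt_rpow hx0.le (by linarith) he))
    (ckTilde_second_factor_pos hk ⟨hx0, hx2⟩)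

lemma add_inv_sub_two_pos {y : ℝ} (hy0 : 0 < y) (hy1 : y ≠ 1) : 0 < y + y⁻¹ - 2 := by
  have hsq : y + y⁻¹ - 2 = (y - 1) ^ 2 / y := by field_simp; ring
  rw [hsq]
  exact div_pos (sq_pos_of_ne_zero (sub_ne_zero.2 hy1)) hy0

lemma sum_Icc_zpow_add_zpow_neg_sub_two_pos {z : ℝ} (hz0 : 0 < z) (hz1 : z ≠ 1) {n : ℕ}
    (hn : n ≠ 0) : 0 < ∑ i ∈ Icc 1 n, (z ^ i + z ^ (-(i : ℤ)) - 2) := by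
  refine sum_pos (fun i hi => ?_) ⟨1, mem_Icc.2 ⟨le_rfl, Nat.one_le_iff_ne_zero.2 hn⟩⟩
  rw [zpow_neg, zpow_natCast]
  exact add_inv_sub_two_pos (pow_pos hz0 i)
    (fun h => hz1 ((pow_eq_one_iff_of_nonneg hz0.le (Nat.one_le_iff_ne_zero.1 (mem_Icc.1 hi).1)).1 h))

/-- For integer `k ≥ 2`, the coefficient function
`c̃_k(x) = (1−x)^{4−2/k} x (1+2(k−1)x) + x^{4−2/k} (1−x)(1+2(k−1)(1−x))
− (1−x)^{2−1/k} x^{2−1/k} (2k−1 − 4(k−1)(1−x)x)` is positive on `(0, 1/2)`;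
equivalently, for every real `z > 1`,
`(z−1)(z^{2k−1}−1) ∑_{i=1}^{k−1} (z^i + z^{−i} − 2) > 0`. -/
theorem ck_tilde_positive (k : ℕ) (hk : 2 ≤ k) :
    (∀ x ∈ Set.Ioo (0 : ℝ) (1 / 2),
      (1 - x) ^ (4 - 2 / (k : ℝ)) * x * (1 + 2 * ((k : ℝ) - 1) * x) +
        x ^ (4 - 2 / (k : ℝ)) * (1 - x) * (1 + 2 * ((k : ℝ) - 1) * (1 - x)) -
        (1 - x) ^ (2 - 1 / (k : ℝ)) * x ^ (2 - 1 / (k : ℝ)) *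
          (2 * (k : ℝ) - 1 - 4 * ((k : ℝ) - 1) * (1 - x) * x) > 0) ∧
    (∀ z : ℝ, 1 < z →
      (z - 1) * (z ^ (2 * k - 1) - 1) *
        ∑ i ∈ Finset.Icc 1 (k - 1), (z ^ i + z ^ (-(i : ℤ)) - 2) > 0) := by
  refine ⟨fun x hx => ckTilde_pos hk hx, fun z hz => ?_⟩
  have hpow : 1 < z ^ (2 * k - 1) := one_lt_pow₀ hz (by omega)
  exact mul_pos (mul_pos (sub_pos.2 hz) (sub_pos.2 hpow))
    (sum_Icc_zpow_add_zpow_neg_sub_two_pos (by linarith) hz.ne' (by omega))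
end

section
/- Let k be a positive integer and define h_k(x) := ∑_{j=0}^{k} C(k,j)² (1−x)^{(2k−1)(k−j)/k} x^{(2k−1)j/k}. Then h_k is twice differentiable on (0,1) and for every x ∈ (0,1) it satisfies ã_k(x) h_k''(x) + b̃_k(x) h_k'(x) + (2k−1) c̃_k(x) h_k(x) = 0, where ã_k(x) := (1−x)²x²((1−x)^{2−1/k} − x^{2−1/k})², b̃_k(x) := (1−x)x((1−x)^{2−1/k} − x^{2−1/k})·((1−x)^{2−1/k}(1+4(k−1)x) + x^{2−1/k}(1+4(k−1)(1−x))), and c̃_k(x) := (1−x)^{4−2/k} x (1+2(k−1)x) + x^{4−2/k} (1−x)(1+2(k−1)(1−x)) − (1−x)^{2−1/k} x^{2−1/k} (2k−1 − 4(k−1)(1−x)x). -/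
/-!
Write `P = (1 - x) ^ (2 - 1/k)` and `Q = x ^ (2 - 1/k)`, so that the `j`-th term of `h_k` is
`C(k,j)² P^(k-j) Q^j = C(k,j)² (1 - x)^a x^b`. The operator `x (1 - x) d/dx` multiplies
`(1 - x)^a x^b` by the polynomial `b (1 - x) - a x`, so the differential operator sends the `j`-th
term to `(2k-1)/k² · C(k,j)² P^(k-j) Q^j (A_j P² + B_j P Q + C_j Q²)` with `A_j, B_j, C_j`
polynomial in `j, k, x`. The coefficient of `P^(k+2-m) Q^m` in the sum over `j` is
`C(k,m)² A_m + C(k,m-1)² B_(m-1) + C(k,m-2)² C_(m-2)`, and the ratio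
`C(k,m+1) (m+1) = C(k,m) (k-m)` reduces its vanishing to a polynomial identity.
-/

open Finset Filter Topology

theorem Finset.sum_range_three_term_eq_zero {R : Type*} [CommRing R] {n : ℕ} {u v w g : ℕ → R}
    (hu₁ : u (n + 1) = 0) (hu₂ : u (n + 2) = 0) (hv : v (n + 1) = 0)
    (h₀ : u 0 = 0) (h₁ : u 1 + v 0 = 0) (hrec : ∀ m, u (m + 2) + v (m + 1) + w m = 0) :
    ∑ j ∈ range (n + 1), (u j * g j + v j * g (j + 1) + w j * g (j + 2)) = 0 := by
  set U : ℕ → R := fun j => u j * g j + u (j + 1) * g (j + 1)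
  set V : ℕ → R := fun j => v j * g (j + 1)
  calc ∑ j ∈ range (n + 1), (u j * g j + v j * g (j + 1) + w j * g (j + 2))
      = ∑ j ∈ range (n + 1), ((U j - U (j + 1)) + (V j - V (j + 1))) :=
        sum_congr rfl fun j _ => by linear_combination g (j + 2) * hrec j
    _ = (U 0 - U (n + 1)) + (V 0 - V (n + 1)) := by
        rw [sum_add_distrib, sum_range_sub', sum_range_sub']
    _ = 0 := by
        simp only [U, V, hu₁, hu₂, hv, h₀]
        linear_combination g 1 * h₁

theorem Nat.cast_choose_succ_right_eq {R : Type*} [CommRing R] (n k : ℕ) :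
    (n.choose (k + 1) : R) * (k + 1) = n.choose k * (n - k) := by
  rcases le_or_gt k n with hkn | hnk
  · rw [← Nat.cast_sub hkn]
    exact_mod_cast congrArg (Nat.cast : ℕ → R) (Nat.choose_succ_right_eq n k)
  · simp [Nat.choose_eq_zero_of_lt hnk, Nat.choose_eq_zero_of_lt (Nat.lt_succ_of_lt hnk)]

section OdeCoefficients

variable {R : Type*} [CommRing R]

def odeCoeffA (k j x : R) : R :=
  (2 * k - 1) * (j - k * x) ^ 2 - k * (j * (1 - x) ^ 2 + (k - j) * x ^ 2)
    + k * (j - k * x) * (1 + 4 * (k - 1) * x) + k ^ 2 * x * (1 + 2 * (k - 1) * x)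

def odeCoeffB (k j x : R) : R :=
  -2 * (2 * k - 1) * (j - k * x) ^ 2 + 2 * k * (j * (1 - x) ^ 2 + (k - j) * x ^ 2)
    + 4 * k * (k - 1) * (j - k * x) * (1 - 2 * x) - k ^ 2 * (2 * k - 1 - 4 * (k - 1) * (1 - x) * x)

def odeCoeffC (k j x : R) : R := odeCoeffA k (k - j) (1 - x)

lemma odeCoeffA_zero (k x : R) : odeCoeffA k 0 x = 0 := by
  unfold odeCoeffA; ring

lemma sq_mul_odeCoeffA_one_add_odeCoeffB_zero (k x : R) :
    k ^ 2 * odeCoeffA k 1 x + odeCoeffB k 0 x = 0 := by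
  unfold odeCoeffA odeCoeffB; ring

lemma odeCoeff_recurrence (k m x : R) :
    (k - m) ^ 2 * (k - m - 1) ^ 2 * odeCoeffA k (m + 2) x
      + (m + 2) ^ 2 * (k - m) ^ 2 * odeCoeffB k (m + 1) x
      + (m + 2) ^ 2 * (m + 1) ^ 2 * odeCoeffC k m x = 0 := by
  unfold odeCoeffC odeCoeffA odeCoeffB; ring

end OdeCoefficients

section OdeSum

variable {K : Type*} [Field K] [CharZero K]

lemma choose_sq_odeCoeff_recurrence (k m : ℕ) (x : K) :
    (k.choose (m + 2) : K) ^ 2 * odeCoeffA (k : K) (m + 2 : ℕ) x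
      + (k.choose (m + 1) : K) ^ 2 * odeCoeffB (k : K) (m + 1 : ℕ) x
      + (k.choose m : K) ^ 2 * odeCoeffC (k : K) m x = 0 := by
  have h₁ := Nat.cast_choose_succ_right_eq (R := K) k m
  have h₂ := Nat.cast_choose_succ_right_eq (R := K) k (m + 1)
  have hne : ((m + 1 : K) * (m + 2)) ^ 2 ≠ 0 := by norm_cast; positivity
  refine (mul_eq_zero.mp ?_).resolve_left hne
  -- times `((m + 1) (m + 2))²`, this follows from `odeCoeff_recurrence` via `h₁` and `h₂`
  push_cast at h₂ ⊢
  linear_combination (odeCoeffA (k : K) (m + 2) x * (m + 1) ^ 2 *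
      ((m + 2) * (k.choose (m + 2) : K) + (k - m - 1) * (k.choose (m + 1) : K))) * h₂
    + ((odeCoeffB (k : K) (m + 1) x * (m + 2) ^ 2 + odeCoeffA (k : K) (m + 2) x * (k - m - 1) ^ 2) *
      ((m + 1) * (k.choose (m + 1) : K) + (k - m) * (k.choose m : K))) * h₁
    + (k.choose m : K) ^ 2 * odeCoeff_recurrence (k : K) m x

theorem sum_choose_sq_mul_odeCoeff_eq_zero (k : ℕ) (x P Q : K) :
    ∑ j ∈ range (k + 1), (k.choose j : K) ^ 2 * P ^ (k - j) * Q ^ j *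
      (odeCoeffA (k : K) j x * P ^ 2 + odeCoeffB (k : K) j x * (P * Q)
        + odeCoeffC (k : K) j x * Q ^ 2) = 0 := by
  set g : ℕ → K := fun m => P ^ (k + 2 - m) * Q ^ m
  calc _ = ∑ j ∈ range (k + 1), ((k.choose j : K) ^ 2 * odeCoeffA (k : K) j x * g j
          + (k.choose j : K) ^ 2 * odeCoeffB (k : K) j x * g (j + 1)
          + (k.choose j : K) ^ 2 * odeCoeffC (k : K) j x * g (j + 2)) := by
        refine sum_congr rfl fun j hj => ?_
        obtain ⟨i, rfl⟩ := Nat.exists_eq_add_of_le (Nat.lt_succ_iff.mp (mem_range.mp hj))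
        simp only [g, Nat.add_sub_cancel_left, show j + i + 2 - j = i + 2 by omega,
          show j + i + 2 - (j + 1) = i + 1 by omega, show j + i + 2 - (j + 2) = i by omega]
        ring
    _ = 0 := Finset.sum_range_three_term_eq_zero (by simp) (by simp [Nat.choose_eq_zero_of_lt])
        (by simp) (by simp [odeCoeffA_zero])
        (by simpa using sq_mul_odeCoeffA_one_add_odeCoeffB_zero (k : K) x)
        fun m => by exact_mod_cast choose_sq_odeCoeff_recurrence k m x

theorem sum_choose_sq_ode_eq_zero {k : ℕ} (hk : k ≠ 0) {a b : ℕ → K}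
    (ha : ∀ j : ℕ, a j = (2 * k - 1) * (k - j) / k)
    (hb : ∀ j : ℕ, b j = (2 * k - 1) * j / k)
    (x P Q : K) :
    (P - Q) ^ 2 * ∑ j ∈ range (k + 1), (k.choose j : K) ^ 2 *
        ((b j * (1 - x) - a j * x) ^ 2 - b j * (1 - x) ^ 2 - a j * x ^ 2) * P ^ (k - j) * Q ^ j
      + (P - Q) * (P * (1 + 4 * (k - 1) * x) + Q * (1 + 4 * (k - 1) * (1 - x))) *
        ∑ j ∈ range (k + 1),
          (k.choose j : K) ^ 2 * (b j * (1 - x) - a j * x) * P ^ (k - j) * Q ^ j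
      + (2 * k - 1) * (P ^ 2 * x * (1 + 2 * (k - 1) * x)
          + Q ^ 2 * (1 - x) * (1 + 2 * (k - 1) * (1 - x))
          - P * Q * (2 * k - 1 - 4 * (k - 1) * (1 - x) * x)) *
        ∑ j ∈ range (k + 1), (k.choose j : K) ^ 2 * P ^ (k - j) * Q ^ j = 0 := by
  have hk' : (k : K) ≠ 0 := Nat.cast_ne_zero.mpr hk
  calc _ = (2 * k - 1) / k ^ 2 * ∑ j ∈ range (k + 1),
        (k.choose j : K) ^ 2 * P ^ (k - j) * Q ^ j * (odeCoeffA (k : K) j x * P ^ 2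
          + odeCoeffB (k : K) j x * (P * Q) + odeCoeffC (k : K) j x * Q ^ 2) := by
        simp only [mul_sum, ← sum_add_distrib]
        refine sum_congr rfl fun j _ => ?_
        rw [ha, hb]
        unfold odeCoeffC odeCoeffA odeCoeffB
        field_simp
        ring
    _ = 0 := by rw [sum_choose_sq_mul_odeCoeff_eq_zero, mul_zero]

end OdeSum

theorem hasDerivAt_one_sub_rpow_mul_rpow {x : ℝ} (a b : ℝ) (hx : x ∈ Set.Ioo 0 1) :
    HasDerivAt (fun y => (1 - y) ^ a * y ^ b)
      (b * ((1 - x) ^ a * x ^ (b - 1)) - a * ((1 - x) ^ (a - 1) * x ^ b)) x := by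
  have h₁ : HasDerivAt (fun y : ℝ => (1 - y) ^ a) (-(a * (1 - x) ^ (a - 1))) x := by
    simpa using ((hasDerivAt_id x).const_sub 1).rpow_const (p := a) (Or.inl (sub_pos.2 hx.2).ne')
  exact (h₁.mul (Real.hasDerivAt_rpow_const (p := b) (Or.inl hx.1.ne'))).congr_deriv (by ring)

section BetaSum

variable {ι : Type*} (s : Finset ι) (c a b : ι → ℝ)

noncomputable def betaSum (x : ℝ) : ℝ := ∑ j ∈ s, c j * (1 - x) ^ a j * x ^ b j

variable {x : ℝ}

theorem hasDerivAt_betaSum (hx : x ∈ Set.Ioo 0 1) :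
    HasDerivAt (betaSum s c a b)
      (betaSum s (c * b) a (b - 1) x - betaSum s (c * a) (a - 1) b x) x := by
  have hassoc : betaSum s c a b = fun y => ∑ j ∈ s, c j * ((1 - y) ^ a j * y ^ b j) :=
    funext fun y => by simp only [betaSum, mul_assoc]
  rw [hassoc]
  refine (HasDerivAt.fun_sum fun j _ =>
    (hasDerivAt_one_sub_rpow_mul_rpow (a j) (b j) hx).const_mul (c j)).congr_deriv ?_
  simp only [betaSum, ← sum_sub_distrib, Pi.mul_apply, Pi.sub_apply, Pi.one_apply]
  exact sum_congr rfl fun j _ => by ring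

theorem deriv_betaSum_eventuallyEq (hx : x ∈ Set.Ioo 0 1) :
    deriv (betaSum s c a b)
      =ᶠ[𝓝 x] betaSum s (c * b) a (b - 1) - betaSum s (c * a) (a - 1) b :=
  eventuallyEq_of_mem (isOpen_Ioo.mem_nhds hx) fun _ hy => (hasDerivAt_betaSum s c a b hy).deriv

theorem hasDerivAt_deriv_betaSum (hx : x ∈ Set.Ioo 0 1) :
    HasDerivAt (deriv (betaSum s c a b))
      ((betaSum s (c * b * (b - 1)) a (b - 1 - 1) x
          - betaSum s (c * b * a) (a - 1) (b - 1) x)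
        - (betaSum s (c * a * b) (a - 1) (b - 1) x
          - betaSum s (c * a * (a - 1)) (a - 1 - 1) b x)) x :=
  ((hasDerivAt_betaSum s _ _ _ hx).sub (hasDerivAt_betaSum s _ _ _ hx)).congr_of_eventuallyEq
    (deriv_betaSum_eventuallyEq s c a b hx)

theorem mul_deriv_betaSum (hx : x ∈ Set.Ioo 0 1) :
    x * (1 - x) * deriv (betaSum s c a b) x
      = betaSum s (fun j => c j * (b j * (1 - x) - a j * x)) a b x := by
  have hx₀ := hx.1.ne'
  have hx₁ := (sub_pos.2 hx.2).ne'
  rw [(hasDerivAt_betaSum s c a b hx).deriv]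
  simp only [betaSum, mul_sum, ← sum_sub_distrib, Pi.mul_apply, Pi.sub_apply, Pi.one_apply,
    Real.rpow_sub_one hx₀, Real.rpow_sub_one hx₁]
  refine sum_congr rfl fun j _ => ?_
  field_simp

theorem sq_mul_deriv_deriv_betaSum (hx : x ∈ Set.Ioo 0 1) :
    (x * (1 - x)) ^ 2 * deriv (deriv (betaSum s c a b)) x
      = betaSum s (fun j => c j * ((b j * (1 - x) - a j * x) ^ 2 - b j * (1 - x) ^ 2 - a j * x ^ 2))
          a b x := by
  have hx₀ := hx.1.ne'
  have hx₁ := (sub_pos.2 hx.2).ne'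
  rw [(hasDerivAt_deriv_betaSum s c a b hx).deriv]
  simp only [betaSum, mul_sum, ← sum_sub_distrib, Pi.mul_apply, Pi.sub_apply, Pi.one_apply,
    Real.rpow_sub_one hx₀, Real.rpow_sub_one hx₁]
  refine sum_congr rfl fun j _ => ?_
  field_simp
  ring

end BetaSum

theorem betaSum_eq_sum_pow {k : ℕ} (hk : k ≠ 0) (d : ℕ → ℝ) {x : ℝ}
    (hx : x ∈ Set.Icc 0 1) :
    betaSum (range (k + 1)) d (fun j : ℕ => (2 * (k : ℝ) - 1) * ((k : ℝ) - j) / k)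
        (fun j : ℕ => (2 * (k : ℝ) - 1) * j / k) x
      = ∑ j ∈ range (k + 1),
          d j * ((1 - x) ^ (2 - 1 / (k : ℝ))) ^ (k - j) * (x ^ (2 - 1 / (k : ℝ))) ^ j := by
  refine sum_congr rfl fun j hj => ?_
  have hjk : j ≤ k := Nat.lt_succ_iff.mp (mem_range.mp hj)
  have hk' : (k : ℝ) ≠ 0 := Nat.cast_ne_zero.mpr hk
  rw [← Real.rpow_mul_natCast (sub_nonneg.2 hx.2), ← Real.rpow_mul_natCast hx.1,
    Nat.cast_sub hjk]
  congr 3 <;> field_simp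

/-- For a positive integer `k` and
`h_k(x) = ∑_{j=0}^{k} C(k,j)² (1−x)^{(2k−1)(k−j)/k} x^{(2k−1)j/k}`, the function
`h_k` is twice differentiable on `(0,1)` and satisfies
`ã_k(x) h_k''(x) + b̃_k(x) h_k'(x) + (2k−1) c̃_k(x) h_k(x) = 0` there. -/
theorem hk_differential_equation (k : ℕ) (hk : 0 < k)
    (h : ℝ → ℝ)
    (hh : ∀ x : ℝ, h x = ∑ j ∈ Finset.range (k + 1),
        (Nat.choose k j : ℝ) ^ 2 *
          (1 - x) ^ ((2 * (k : ℝ) - 1) * ((k : ℝ) - j) / k) *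
          x ^ ((2 * (k : ℝ) - 1) * (j : ℝ) / k)) :
    ∀ x ∈ Set.Ioo (0 : ℝ) 1,
      DifferentiableAt ℝ h x ∧ DifferentiableAt ℝ (deriv h) x ∧
      ((1 - x) ^ 2 * x ^ 2 * ((1 - x) ^ (2 - 1 / (k : ℝ)) - x ^ (2 - 1 / (k : ℝ))) ^ 2) *
          deriv (deriv h) x +
        ((1 - x) * x * ((1 - x) ^ (2 - 1 / (k : ℝ)) - x ^ (2 - 1 / (k : ℝ))) *
          ((1 - x) ^ (2 - 1 / (k : ℝ)) * (1 + 4 * ((k : ℝ) - 1) * x) +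
            x ^ (2 - 1 / (k : ℝ)) * (1 + 4 * ((k : ℝ) - 1) * (1 - x)))) * deriv h x +
        (2 * (k : ℝ) - 1) *
          ((1 - x) ^ (4 - 2 / (k : ℝ)) * x * (1 + 2 * ((k : ℝ) - 1) * x) +
            x ^ (4 - 2 / (k : ℝ)) * (1 - x) * (1 + 2 * ((k : ℝ) - 1) * (1 - x)) -
            (1 - x) ^ (2 - 1 / (k : ℝ)) * x ^ (2 - 1 / (k : ℝ)) *
              (2 * (k : ℝ) - 1 - 4 * ((k : ℝ) - 1) * (1 - x) * x)) * h x
        = 0 := by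
  intro x hx
  set c : ℕ → ℝ := fun j => (k.choose j : ℝ) ^ 2
  set a : ℕ → ℝ := fun j => (2 * (k : ℝ) - 1) * ((k : ℝ) - j) / k
  set b : ℕ → ℝ := fun j => (2 * (k : ℝ) - 1) * j / k
  obtain rfl : h = betaSum (range (k + 1)) c a b := funext hh
  refine ⟨(hasDerivAt_betaSum _ c a b hx).differentiableAt,
    (hasDerivAt_deriv_betaSum _ c a b hx).differentiableAt, ?_⟩
  have hxI := Set.Ioo_subset_Icc_self hx
  have e₀ : betaSum (range (k + 1)) c a b x = _ := betaSum_eq_sum_pow hk.ne' c hxI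
  have e₁ := (mul_deriv_betaSum _ c a b hx).trans (betaSum_eq_sum_pow hk.ne' _ hxI)
  have e₂ := (sq_mul_deriv_deriv_betaSum _ c a b hx).trans (betaSum_eq_sum_pow hk.ne' _ hxI)
  have hsq : ∀ z : ℝ, 0 ≤ z → z ^ (4 - 2 / (k : ℝ)) = (z ^ (2 - 1 / (k : ℝ))) ^ 2 := fun z hz => by
    rw [← Real.rpow_mul_natCast hz]; congr 1; push_cast; ring
  rw [hsq _ (sub_nonneg.2 hxI.2), hsq _ hxI.1, e₀]
  set P := (1 - x) ^ (2 - 1 / (k : ℝ))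
  set Q := x ^ (2 - 1 / (k : ℝ))
  linear_combination (P - Q) ^ 2 * e₂
    + (P - Q) * (P * (1 + 4 * ((k : ℝ) - 1) * x) + Q * (1 + 4 * ((k : ℝ) - 1) * (1 - x))) * e₁
    + sum_choose_sq_ode_eq_zero hk.ne' (fun _ => rfl) (fun _ => rfl) x P Q
end
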